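/- arXiv:1910.10057 — 7 statements merged into one kernel-verified Lean document; each statement's English description precedes it below -/
import Mathlib

section
/- For ε ∈ (0,1), let M_ε ⊆ [0,1] be the middle-ε Cantor set, i.e. the attractor of the iterated function system {x ↦ ((1−ε)/2)·x, x ↦ ((1−ε)/2)·x + (1+ε)/2} on ℝ (the unique nonempty compact set invariant under these two maps). Then the thickness of M_ε equals (1 − ε)/(2ε). -/
/-- The infimum distance between two sets of reals (junk value `0` if either is empty). -/
noncomputable def setDist (S T : Set ℝ) : ℝ := sInf (Set.image2 dist S T)

/-- `S` is a chunk of `C` if `S = C ∩ J` for a closed interval `J`, `S` is a nonempty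
proper subset of `C`, and `dist (S, C \ S) > 0`. -/
def IsChunk (C S : Set ℝ) : Prop :=
  (∃ a b : ℝ, S = C ∩ Set.Icc a b) ∧ S.Nonempty ∧ S ⊂ C ∧ 0 < setDist S (C \ S)

open Classical in
/-- The Newhouse thickness of a compact set `C ⊆ ℝ`: the infimum over all chunks `S` of
`diam S / dist (S, C \ S)`; a singleton has thickness `0`, and a set with no chunk
(e.g. a nondegenerate closed interval) has thickness `+∞`. -/
noncomputable def thickness (C : Set ℝ) : ENNReal :=
  if ∃ x : ℝ, C = {x} then 0
  else ⨅ (S : Set ℝ) (_ : IsChunk C S), ENNReal.ofReal (Metric.diam S / setDist S (C \ S))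

lemma setDist_le {S T : Set ℝ} {x y : ℝ} (hx : x ∈ S) (hy : y ∈ T) :
    setDist S T ≤ dist x y := by
  apply csInf_le
  · exact ⟨0, by rintro _ ⟨a, ha, b, hb, rfl⟩; exact dist_nonneg⟩
  · exact Set.mem_image2_of_mem hx hy

lemma setDist_exists {S T : Set ℝ} (hS : IsCompact S) (hT : IsCompact T)
    (hSne : S.Nonempty) (hTne : T.Nonempty) :
    ∃ x ∈ S, ∃ y ∈ T, dist x y = setDist S T := by
  have himg : Set.image2 dist S T = (fun p : ℝ × ℝ => dist p.1 p.2) '' (S ×ˢ T) := by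
    rw [Set.image_prod]
  have hcomp : IsCompact (Set.image2 dist S T) := by
    rw [himg]; exact (hS.prod hT).image continuous_dist
  have hne : (Set.image2 dist S T).Nonempty := hSne.image2 hTne
  have := hcomp.sInf_mem hne
  obtain ⟨x, hx, y, hy, hxy⟩ := this
  exact ⟨x, hx, y, hy, hxy⟩

/-- A gap of `M`: two points of `M` with nothing of `M` strictly between. -/
def MGap (M : Set ℝ) (x y : ℝ) : Prop :=
  x ∈ M ∧ y ∈ M ∧ x < y ∧ ∀ z ∈ M, z ∉ Set.Ioo x y

section Cantor

variable {r : ℝ} {M : Set ℝ}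

lemma cantor_basic (hr0 : 0 < r) (hr2 : r < 1/2) (hMne : M.Nonempty) (hMc : IsCompact M)
    (hM : M = (fun x => r * x) '' M ∪ (fun x => r * x + (1 - r)) '' M) :
    M ⊆ Set.Icc 0 1 ∧ 0 ∈ M ∧ 1 ∈ M := by
  have hr1 : r < 1 := by linarith
  set m := sInf M with hm
  set s := sSup M with hs
  have hmM : m ∈ M := hMc.sInf_mem hMne
  have hsM : s ∈ M := hMc.sSup_mem hMne
  have hbdd : BddBelow M := hMc.bddBelow
  have hbddA : BddAbove M := hMc.bddAbove
  have hle : ∀ x ∈ M, m ≤ x := fun x hx => csInf_le hbdd hx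
  have hge : ∀ x ∈ M, x ≤ s := fun x hx => le_csSup hbddA hx
  have hrmM : r * m ∈ M := by
    rw [hM]; exact Or.inl ⟨m, hmM, rfl⟩
  have hrsM : r * s + (1 - r) ∈ M := by
    rw [hM]; exact Or.inr ⟨s, hsM, rfl⟩
  have hm0 : m = 0 := by
    have h1 : m ≤ r * m := hle _ hrmM
    have heq : m = r * m := by
      rw [hM] at hmM
      rcases hmM with ⟨w, hw, hew⟩ | ⟨w, hw, hew⟩ <;> dsimp only at hew
      · nlinarith [hle w hw, mul_nonneg hr0.le (sub_nonneg.2 (hle w hw))]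
      · nlinarith [hle w hw, mul_nonneg hr0.le (sub_nonneg.2 (hle w hw))]
    have : m * (1 - r) = 0 := by nlinarith
    rcases mul_eq_zero.1 this with h | h
    · exact h
    · linarith
  have hs1 : s = 1 := by
    have h1 : r * s + (1 - r) ≤ s := hge _ hrsM
    have heq : s = r * s + (1 - r) := by
      rw [hM] at hsM
      rcases hsM with ⟨w, hw, hew⟩ | ⟨w, hw, hew⟩ <;> dsimp only at hew
      · nlinarith [hge w hw, mul_nonneg hr0.le (sub_nonneg.2 (hge w hw))]
      · nlinarith [hge w hw, mul_nonneg hr0.le (sub_nonneg.2 (hge w hw))]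
    have : (s - 1) * (1 - r) = 0 := by nlinarith
    rcases mul_eq_zero.1 this with h | h
    · linarith
    · linarith
  refine ⟨fun x hx => ⟨?_, ?_⟩, ?_, ?_⟩
  · rw [← hm0]; exact hle x hx
  · rw [← hs1]; exact hge x hx
  · rw [← hm0]; exact hmM
  · rw [← hs1]; exact hsM

lemma cantor_mul (hM : M = (fun x => r * x) '' M ∪ (fun x => r * x + (1 - r)) '' M)
    {x : ℝ} (hx : x ∈ M) : r * x ∈ M := by
  rw [hM]
  exact Or.inl ⟨x, hx, rfl⟩

lemma cantor_aff (hM : M = (fun x => r * x) '' M ∪ (fun x => r * x + (1 - r)) '' M)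
    {x : ℝ} (hx : x ∈ M) : r * x + (1 - r) ∈ M := by
  rw [hM]
  exact Or.inr ⟨x, hx, rfl⟩

/-- Points of `M` at level ≤ r come from the left copy. -/
lemma cantor_left (hr0 : 0 < r) (hr2 : r < 1/2) (hMne : M.Nonempty) (hMc : IsCompact M)
    (hM : M = (fun x => r * x) '' M ∪ (fun x => r * x + (1 - r)) '' M)
    {z : ℝ} (hz : z ∈ M) (hzr : z ≤ r) : z / r ∈ M := by
  obtain ⟨hsub, -, -⟩ := cantor_basic hr0 hr2 hMne hMc hM
  rw [hM] at hz
  rcases hz with ⟨w, hw, hew⟩ | ⟨w, hw, hew⟩ <;> dsimp only at hew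
  · rw [← hew]; rw [mul_comm, mul_div_assoc, div_self hr0.ne', mul_one]; exact hw
  · exfalso
    have hw0 : 0 ≤ w := (hsub hw).1
    nlinarith

lemma cantor_right (hr0 : 0 < r) (hr2 : r < 1/2) (hMne : M.Nonempty) (hMc : IsCompact M)
    (hM : M = (fun x => r * x) '' M ∪ (fun x => r * x + (1 - r)) '' M)
    {z : ℝ} (hz : z ∈ M) (hzr : 1 - r ≤ z) : (z - (1 - r)) / r ∈ M := by
  obtain ⟨hsub, -, -⟩ := cantor_basic hr0 hr2 hMne hMc hM
  rw [hM] at hz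
  rcases hz with ⟨w, hw, hew⟩ | ⟨w, hw, hew⟩ <;> dsimp only at hew
  · exfalso
    have hw1 : w ≤ 1 := (hsub hw).2
    nlinarith
  · rw [← hew]
    have : r * w + (1 - r) - (1 - r) = r * w := by ring
    rw [this, mul_comm, mul_div_assoc, div_self hr0.ne', mul_one]; exact hw

lemma cantor_no_middle (hr0 : 0 < r) (hr2 : r < 1/2) (hMne : M.Nonempty) (hMc : IsCompact M)
    (hM : M = (fun x => r * x) '' M ∪ (fun x => r * x + (1 - r)) '' M)
    {z : ℝ} (hz : z ∈ M) : z ≤ r ∨ 1 - r ≤ z := by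
  obtain ⟨hsub, -, -⟩ := cantor_basic hr0 hr2 hMne hMc hM
  rw [hM] at hz
  rcases hz with ⟨w, hw, hew⟩ | ⟨w, hw, hew⟩ <;> dsimp only at hew
  · left; have := (hsub hw).2; nlinarith
  · right; have := (hsub hw).1; nlinarith

lemma gap_scale_left (hr0 : 0 < r) (hr2 : r < 1/2) (hMne : M.Nonempty) (hMc : IsCompact M)
    (hM : M = (fun x => r * x) '' M ∪ (fun x => r * x + (1 - r)) '' M)
    {x y : ℝ} (hg : MGap M x y) (hyr : y ≤ r) : MGap M (x / r) (y / r) := by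
  obtain ⟨hx, hy, hxy, hgap⟩ := hg
  refine ⟨cantor_left hr0 hr2 hMne hMc hM hx (by linarith),
    cantor_left hr0 hr2 hMne hMc hM hy hyr, div_lt_div_of_pos_right hxy hr0, ?_⟩
  rintro z hz ⟨h1, h2⟩
  refine hgap (r * z) (cantor_mul hM hz) ⟨?_, ?_⟩
  · calc x = r * (x / r) := by field_simp
    _ < r * z := by exact (mul_lt_mul_iff_right₀ hr0).2 h1
  · calc r * z < r * (y / r) := (mul_lt_mul_iff_right₀ hr0).2 h2
    _ = y := by field_simp

lemma gap_scale_right (hr0 : 0 < r) (hr2 : r < 1/2) (hMne : M.Nonempty) (hMc : IsCompact M)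
    (hM : M = (fun x => r * x) '' M ∪ (fun x => r * x + (1 - r)) '' M)
    {x y : ℝ} (hg : MGap M x y) (hxr : 1 - r ≤ x) :
    MGap M ((x - (1 - r)) / r) ((y - (1 - r)) / r) := by
  obtain ⟨hx, hy, hxy, hgap⟩ := hg
  refine ⟨cantor_right hr0 hr2 hMne hMc hM hx hxr,
    cantor_right hr0 hr2 hMne hMc hM hy (by linarith),
    div_lt_div_of_pos_right (by linarith) hr0, ?_⟩
  rintro z hz ⟨h1, h2⟩
  refine hgap (r * z + (1 - r)) (cantor_aff hM hz) ⟨?_, ?_⟩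
  · have : x = r * ((x - (1 - r)) / r) + (1 - r) := by field_simp; ring
    rw [this]
    have := (mul_lt_mul_iff_right₀ hr0).2 h1
    linarith
  · have hyy : y = r * ((y - (1 - r)) / r) + (1 - r) := by field_simp; ring
    have := (mul_lt_mul_iff_right₀ hr0).2 h2
    linarith [hyy]

lemma gap_trichotomy (hr0 : 0 < r) (hr2 : r < 1/2) (hMne : M.Nonempty) (hMc : IsCompact M)
    (hM : M = (fun x => r * x) '' M ∪ (fun x => r * x + (1 - r)) '' M)
    {x y : ℝ} (hg : MGap M x y) :
    y ≤ r ∨ 1 - r ≤ x ∨ (x = r ∧ y = 1 - r) := by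
  obtain ⟨hx, hy, hxy, hgap⟩ := hg
  have hrM : r ∈ M := by
    have := cantor_mul hM (cantor_basic hr0 hr2 hMne hMc hM).2.2
    simpa using this
  have h1rM : (1 : ℝ) - r ∈ M := by
    have := cantor_aff hM (cantor_basic hr0 hr2 hMne hMc hM).2.1
    simpa using this
  by_cases hyr : y ≤ r
  · exact Or.inl hyr
  push_neg at hyr
  have hxr : r ≤ x := by
    by_contra h
    push_neg at h
    exact hgap r hrM ⟨h, hyr⟩
  by_cases hx1r : 1 - r ≤ x
  · exact Or.inr (Or.inl hx1r)
  push_neg at hx1r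
  have hy1r : y ≤ 1 - r := by
    by_contra h
    push_neg at h
    exact hgap (1 - r) h1rM ⟨hx1r, h⟩
  right; right
  constructor
  · rcases cantor_no_middle hr0 hr2 hMne hMc hM hx with h | h
    · linarith
    · linarith
  · rcases cantor_no_middle hr0 hr2 hMne hMc hM hy with h | h
    · linarith
    · linarith

lemma gap_le_aux (hr0 : 0 < r) (hr2 : r < 1/2) (hMne : M.Nonempty) (hMc : IsCompact M)
    (hM : M = (fun x => r * x) '' M ∪ (fun x => r * x + (1 - r)) '' M) :
    ∀ n : ℕ, ∀ x y : ℝ, MGap M x y → y - x ≤ 1 - 2*r ∨ y - x ≤ r ^ n := by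
  intro n
  induction n with
  | zero =>
    intro x y hg
    right
    obtain ⟨hsub, -, -⟩ := cantor_basic hr0 hr2 hMne hMc hM
    have h1 := (hsub hg.1).1
    have h2 := (hsub hg.2.1).2
    simp only [pow_zero]
    linarith
  | succ n ih =>
    intro x y hg
    rcases gap_trichotomy hr0 hr2 hMne hMc hM hg with hc | hc | hc
    · have hg' := gap_scale_left hr0 hr2 hMne hMc hM hg hc
      rcases ih _ _ hg' with h | h
      · left
        have : y - x ≤ r * (1 - 2*r) := by
          have := (mul_le_mul_iff_right₀ hr0).2 h
          calc y - x = r * (y / r - x / r) := by field_simp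
          _ ≤ r * (1 - 2*r) := (mul_le_mul_iff_right₀ hr0).2 h
        nlinarith
      · right
        calc y - x = r * (y / r - x / r) := by field_simp
        _ ≤ r * r ^ n := (mul_le_mul_iff_right₀ hr0).2 h
        _ = r ^ (n+1) := by ring
    · have hg' := gap_scale_right hr0 hr2 hMne hMc hM hg hc
      have key : (y - (1-r)) / r - (x - (1-r)) / r = (y - x) / r := by ring
      rcases ih _ _ hg' with h | h <;> rw [key] at h
      · left
        have : y - x ≤ r * (1 - 2*r) := by
          calc y - x = r * ((y - x) / r) := by field_simp
          _ ≤ r * (1 - 2*r) := (mul_le_mul_iff_right₀ hr0).2 h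
        nlinarith
      · right
        calc y - x = r * ((y - x) / r) := by field_simp
        _ ≤ r * r ^ n := (mul_le_mul_iff_right₀ hr0).2 h
        _ = r ^ (n+1) := by ring
    · left; rw [hc.1, hc.2]; linarith

lemma gap_le (hr0 : 0 < r) (hr2 : r < 1/2) (hMne : M.Nonempty) (hMc : IsCompact M)
    (hM : M = (fun x => r * x) '' M ∪ (fun x => r * x + (1 - r)) '' M)
    {x y : ℝ} (hg : MGap M x y) : y - x ≤ 1 - 2*r := by
  obtain ⟨n, hn⟩ := exists_pow_lt_of_lt_one (by linarith [hg.2.2.1] : (0:ℝ) < y - x)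
    (by linarith : r < 1)
  rcases gap_le_aux hr0 hr2 hMne hMc hM n x y hg with h | h
  · exact h
  · linarith

/-- The conclusion of the key structure lemma for a gap `(x, y)` of `M`:
both "bridges" of relative size `r/(1-2r)` adjacent to the gap reach into `M`,
and all gaps of `M` inside those bridges are strictly shorter than the gap. -/
def BridgeProp (r : ℝ) (M : Set ℝ) (x y : ℝ) : Prop :=
  x - r / (1 - 2*r) * (y - x) ∈ M ∧ y + r / (1 - 2*r) * (y - x) ∈ M ∧
  (∀ u v, MGap M u v → x - r / (1 - 2*r) * (y - x) ≤ u → v ≤ x → v - u < y - x) ∧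
  (∀ u v, MGap M u v → y ≤ u → v ≤ y + r / (1 - 2*r) * (y - x) → v - u < y - x)

lemma div_sub_div_lt_cancel {r a b c d : ℝ} (hr0 : 0 < r)
    (h : a / r - b / r < c / r - d / r) : a - b < c - d := by
  rw [div_sub_div_same, div_sub_div_same, div_lt_div_iff₀ hr0 hr0] at h
  exact (mul_lt_mul_iff_left₀ hr0).1 h

lemma bridge_main (hr0 : 0 < r) (hr2 : r < 1/2) (hMne : M.Nonempty) (hMc : IsCompact M)
    (hM : M = (fun x => r * x) '' M ∪ (fun x => r * x + (1 - r)) '' M) :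
    ∀ n : ℕ, ∀ x y : ℝ, MGap M x y → r ^ n < y - x → BridgeProp r M x y := by
  have hε : (0:ℝ) < 1 - 2*r := by linarith
  have hρ0 : (0:ℝ) < r / (1 - 2*r) := div_pos hr0 hε
  obtain ⟨hsub, h0M, h1M⟩ := cantor_basic hr0 hr2 hMne hMc hM
  intro n
  induction n with
  | zero =>
    intro x y hg hlen
    exfalso
    have := gap_le hr0 hr2 hMne hMc hM hg
    simp only [pow_zero] at hlen
    linarith
  | succ n ih =>
    intro x y hg hlen
    have hρr : r / (1 - 2*r) * (1 - 2*r) = r := div_mul_cancel₀ r hε.ne'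
    have hd0 : 0 < y - x := by linarith [hg.2.2.1]
    rcases gap_trichotomy hr0 hr2 hMne hMc hM hg with hc | hc | hc
    · -- left copy: y ≤ r
      have hg' := gap_scale_left hr0 hr2 hMne hMc hM hg hc
      have hlen' : r ^ n < y / r - x / r := by
        rw [div_sub_div_same, lt_div_iff₀ hr0]
        calc r ^ n * r = r ^ (n+1) := by ring
        _ < y - x := hlen
      obtain ⟨hm1, hm2, hb1, hb2⟩ := ih _ _ hg' hlen'
      have e1 : x / r - r / (1 - 2*r) * (y / r - x / r) = (x - r / (1 - 2*r) * (y - x)) / r := by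
        field_simp
      have e2 : y / r + r / (1 - 2*r) * (y / r - x / r) = (y + r / (1 - 2*r) * (y - x)) / r := by
        field_simp
      rw [e1] at hm1 hb1
      rw [e2] at hm2 hb2
      have hm1' : x - r / (1 - 2*r) * (y - x) ∈ M := by
        have := cantor_mul hM hm1
        rwa [mul_div_cancel₀ _ hr0.ne'] at this
      have hm2' : y + r / (1 - 2*r) * (y - x) ∈ M := by
        have := cantor_mul hM hm2
        rwa [mul_div_cancel₀ _ hr0.ne'] at this
      have hhigh : y + r / (1 - 2*r) * (y - x) ≤ r := by
        have h01 := (hsub hm2).2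
        rw [div_le_one hr0] at h01
        linarith
      refine ⟨hm1', hm2', ?_, ?_⟩
      · intro u v hguv hu hv
        have hvr : v ≤ r := by linarith [hg.2.2.1]
        have hguv' := gap_scale_left hr0 hr2 hMne hMc hM hguv hvr
        have hres := hb1 _ _ hguv' (by gcongr) (by gcongr)
        exact div_sub_div_lt_cancel hr0 hres
      · intro u v hguv hu hv
        have hvr : v ≤ r := le_trans hv hhigh
        have hguv' := gap_scale_left hr0 hr2 hMne hMc hM hguv hvr
        have hres := hb2 _ _ hguv' (by gcongr) (by gcongr)
        exact div_sub_div_lt_cancel hr0 hres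
    · -- right copy: 1 - r ≤ x
      have hg' := gap_scale_right hr0 hr2 hMne hMc hM hg hc
      have hlen' : r ^ n < (y - (1-r)) / r - (x - (1-r)) / r := by
        rw [div_sub_div_same]
        have : y - (1-r) - (x - (1-r)) = y - x := by ring
        rw [this, lt_div_iff₀ hr0]
        calc r ^ n * r = r ^ (n+1) := by ring
        _ < y - x := hlen
      obtain ⟨hm1, hm2, hb1, hb2⟩ := ih _ _ hg' hlen'
      have e1 : (x - (1-r)) / r - r / (1 - 2*r) * ((y - (1-r)) / r - (x - (1-r)) / r)
          = (x - r / (1 - 2*r) * (y - x) - (1 - r)) / r := by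
        field_simp
        ring
      have e2 : (y - (1-r)) / r + r / (1 - 2*r) * ((y - (1-r)) / r - (x - (1-r)) / r)
          = (y + r / (1 - 2*r) * (y - x) - (1 - r)) / r := by
        field_simp
        ring
      rw [e1] at hm1 hb1
      rw [e2] at hm2 hb2
      have aff : ∀ t : ℝ, t ∈ M → r * ((t - (1-r)) / r) + (1 - r) = t → t ∈ M := fun t ht _ => ht
      have hm1' : x - r / (1 - 2*r) * (y - x) ∈ M := by
        have := cantor_aff hM hm1
        have e : r * ((x - r / (1 - 2*r) * (y - x) - (1 - r)) / r) + (1 - r)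
            = x - r / (1 - 2*r) * (y - x) := by field_simp; ring
        rwa [e] at this
      have hm2' : y + r / (1 - 2*r) * (y - x) ∈ M := by
        have := cantor_aff hM hm2
        have e : r * ((y + r / (1 - 2*r) * (y - x) - (1 - r)) / r) + (1 - r)
            = y + r / (1 - 2*r) * (y - x) := by field_simp; ring
        rwa [e] at this
      have hlow : 1 - r ≤ x - r / (1 - 2*r) * (y - x) := by
        have h01 := (hsub hm1).1
        rw [le_div_iff₀ hr0] at h01
        linarith
      refine ⟨hm1', hm2', ?_, ?_⟩
      · intro u v hguv hu hv
        have hur : 1 - r ≤ u := le_trans hlow hu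
        have hguv' := gap_scale_right hr0 hr2 hMne hMc hM hguv hur
        have hres := hb1 _ _ hguv' (by gcongr) (by gcongr)
        have := div_sub_div_lt_cancel hr0 hres
        linarith
      · intro u v hguv hu hv
        have hur : 1 - r ≤ u := by linarith [hg.2.2.1]
        have hguv' := gap_scale_right hr0 hr2 hMne hMc hM hguv hur
        have hres := hb2 _ _ hguv' (by gcongr) (by gcongr)
        have := div_sub_div_lt_cancel hr0 hres
        linarith
    · -- middle gap
      obtain ⟨hcx, hcy⟩ := hc
      have hda : y - x = 1 - 2*r := by rw [hcx, hcy]; ring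
      have hmul : r / (1 - 2*r) * (y - x) = r := by rw [hda, hρr]
      have hx0 : x - r / (1 - 2*r) * (y - x) = 0 := by rw [hmul, hcx]; ring
      have hy1 : y + r / (1 - 2*r) * (y - x) = 1 := by rw [hmul, hcy]; ring
      refine ⟨by rw [hx0]; exact h0M, by rw [hy1]; exact h1M, ?_, ?_⟩
      · intro u v hguv hu hv
        have hvr : v ≤ r := by rw [hcx] at hv; exact hv
        have hguv' := gap_scale_left hr0 hr2 hMne hMc hM hguv hvr
        have hle := gap_le hr0 hr2 hMne hMc hM hguv'
        rw [div_sub_div_same, div_le_iff₀ hr0] at hle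
        have hd : 0 < v - u := by linarith [hguv.2.2.1]
        rw [hda]
        nlinarith
      · intro u v hguv hu hv
        have hur : 1 - r ≤ u := by rw [hcy] at hu; exact hu
        have hguv' := gap_scale_right hr0 hr2 hMne hMc hM hguv hur
        have hle := gap_le hr0 hr2 hMne hMc hM hguv'
        have e : (v - (1-r)) / r - (u - (1-r)) / r = (v - u) / r := by ring
        rw [e, div_le_iff₀ hr0] at hle
        have hd : 0 < v - u := by linarith [hguv.2.2.1]
        rw [hda]
        nlinarith

end Cantor

section Chunks

variable {r : ℝ} {M : Set ℝ}

lemma bridge_all (hr0 : 0 < r) (hr2 : r < 1/2) (hMne : M.Nonempty) (hMc : IsCompact M)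
    (hM : M = (fun x => r * x) '' M ∪ (fun x => r * x + (1 - r)) '' M)
    {x y : ℝ} (hg : MGap M x y) : BridgeProp r M x y := by
  obtain ⟨n, hn⟩ := exists_pow_lt_of_lt_one (by linarith [hg.2.2.1] : (0:ℝ) < y - x)
    (by linarith : r < 1)
  exact bridge_main hr0 hr2 hMne hMc hM n x y hg hn

lemma chain_lemma (hMc : IsCompact M) {S : Set ℝ} (hS : S ⊆ M) (hScl : IsClosed S)
    (hTcl : IsClosed (M \ S)) {d : ℝ} (hd0 : 0 < d)
    (hsep : ∀ x ∈ S, ∀ y ∈ M \ S, d ≤ dist x y) {p q : ℝ}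
    (hgaps : ∀ u v, MGap M u v → p ≤ u → v ≤ q → v - u < d)
    (hne : (S ∩ Set.Icc p q).Nonempty) : M ∩ Set.Icc p q ⊆ S := by
  by_contra h
  obtain ⟨b, hbMI, hbS⟩ := Set.not_subset.1 h
  set A := S ∩ Set.Icc p q with hA
  set B := (M \ S) ∩ Set.Icc p q with hB
  have hAcomp : IsCompact A := hMc.of_isClosed_subset (hScl.inter isClosed_Icc)
    (Set.inter_subset_left.trans hS)
  have hBcomp : IsCompact B := hMc.of_isClosed_subset (hTcl.inter isClosed_Icc)
    (Set.inter_subset_left.trans Set.diff_subset)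
  have hBne : B.Nonempty := ⟨b, ⟨hbMI.1, hbS⟩, hbMI.2⟩
  obtain ⟨a, haA, c, hcB, hac⟩ := setDist_exists hAcomp hBcomp hne hBne
  have hdle : d ≤ dist a c := hsep a haA.1 c hcB.1
  have hgapmk : ∀ z ∈ M, z ∉ Set.Ioo (min a c) (max a c) := by
    intro z hz hzI
    have hzp : p ≤ z := le_trans (le_min haA.2.1 hcB.2.1) hzI.1.le
    have hzq : z ≤ q := le_trans hzI.2.le (max_le haA.2.2 hcB.2.2)
    have hzA : z ∈ Set.Icc p q := ⟨hzp, hzq⟩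
    by_cases hzS : z ∈ S
    · have h1 : setDist A B ≤ dist z c := setDist_le ⟨hzS, hzA⟩ hcB
      have h2 : dist z c < dist a c := by
        rw [Real.dist_eq, Real.dist_eq]
        rcases le_total a c with hle | hle
        · rw [min_eq_left hle, max_eq_right hle] at hzI
          rw [abs_of_nonpos (by linarith [hzI.2] : z - c ≤ 0),
            abs_of_nonpos (by linarith [hzI.1] : a - c ≤ 0)]
          linarith [hzI.1]
        · rw [min_eq_right hle, max_eq_left hle] at hzI
          rw [abs_of_nonneg (by linarith [hzI.1] : 0 ≤ z - c),
            abs_of_nonneg (by linarith [hzI.2] : 0 ≤ a - c)]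
          linarith [hzI.2]
      rw [hac] at h2
      linarith
    · have h1 : setDist A B ≤ dist a z := setDist_le haA ⟨⟨hz, hzS⟩, hzA⟩
      have h2 : dist a z < dist a c := by
        rw [Real.dist_eq, Real.dist_eq]
        rcases le_total a c with hle | hle
        · rw [min_eq_left hle, max_eq_right hle] at hzI
          rw [abs_of_nonpos (by linarith [hzI.1] : a - z ≤ 0),
            abs_of_nonpos (by linarith : a - c ≤ 0)]
          linarith [hzI.2]
        · rw [min_eq_right hle, max_eq_left hle] at hzI
          rw [abs_of_nonneg (by linarith [hzI.2] : 0 ≤ a - z),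
            abs_of_nonneg (by linarith : 0 ≤ a - c)]
          linarith [hzI.1]
      rw [hac] at h2
      linarith
  have hane : a ≠ c := by
    intro he
    have : a ∈ B := he ▸ hcB
    exact this.1.2 haA.1
  have hgap : MGap M (min a c) (max a c) :=
    ⟨by rcases le_total a c with h | h;
        · rw [min_eq_left h]; exact hS haA.1
        · rw [min_eq_right h]; exact hcB.1.1,
     by rcases le_total a c with h | h;
        · rw [max_eq_right h]; exact hcB.1.1
        · rw [max_eq_left h]; exact hS haA.1,
     by rcases lt_or_gt_of_ne hane with h | h;
        · rw [min_eq_left h.le, max_eq_right h.le]; exact h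
        · rw [min_eq_right h.le, max_eq_left h.le]; exact h,
     hgapmk⟩
  have hlt := hgaps _ _ hgap (le_min haA.2.1 hcB.2.1) (max_le haA.2.2 hcB.2.2)
  have : max a c - min a c = dist a c := by
    rw [Real.dist_eq]
    rcases le_total a c with h | h
    · rw [min_eq_left h, max_eq_right h, abs_of_nonpos (by linarith : a - c ≤ 0)]; ring
    · rw [min_eq_right h, max_eq_left h, abs_of_nonneg (by linarith : 0 ≤ a - c)]
  rw [this] at hlt
  linarith

end Chunks

section Main

variable {r : ℝ} {M : Set ℝ}

lemma chunk_lower (hr0 : 0 < r) (hr2 : r < 1/2) (hMne : M.Nonempty) (hMc : IsCompact M)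
    (hM : M = (fun x => r * x) '' M ∪ (fun x => r * x + (1 - r)) '' M)
    {S : Set ℝ} (hS : IsChunk M S) :
    r / (1 - 2*r) * setDist S (M \ S) ≤ Metric.diam S := by
  obtain ⟨⟨a0, b0, hSeq⟩, hSne, hSsub, hd0⟩ := hS
  set d := setDist S (M \ S) with hd
  have hSsubM : S ⊆ M := hSeq ▸ Set.inter_subset_left
  have hScl : IsClosed S := hSeq ▸ (hMc.isClosed.inter isClosed_Icc)
  have hScomp : IsCompact S := hMc.of_isClosed_subset hScl hSsubM
  have hsep : ∀ x ∈ S, ∀ y ∈ M \ S, d ≤ dist x y := fun x hx y hy => setDist_le hx hy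
  have hTcl : IsClosed (M \ S) := by
    rw [← closure_subset_iff_isClosed]
    intro z hz
    have hzM : z ∈ M := hMc.isClosed.closure_subset_iff.2 Set.diff_subset hz
    refine ⟨hzM, fun hzS => ?_⟩
    obtain ⟨w, hw, hwd⟩ := Metric.mem_closure_iff.1 hz d hd0
    exact absurd (hsep z hzS w hw) (by linarith)
  have hTne : (M \ S).Nonempty := by
    obtain ⟨w, hwM, hwS⟩ := Set.exists_of_ssubset hSsub
    exact ⟨w, hwM, hwS⟩
  have hTcomp : IsCompact (M \ S) := hMc.of_isClosed_subset hTcl Set.diff_subset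
  obtain ⟨x, hxS, y, hyT, hxy⟩ := setDist_exists hScomp hTcomp hSne hTne
  have hρ0 : (0:ℝ) < r / (1 - 2*r) := div_pos hr0 (by linarith)
  have hSbd : Bornology.IsBounded S := hScomp.isBounded
  rcases lt_trichotomy x y with hlt | heq | hlt
  · -- gap (x, y), use left bridge
    have hgap : MGap M x y := by
      refine ⟨hSsubM hxS, hyT.1, hlt, fun z hz hzI => ?_⟩
      by_cases hzS : z ∈ S
      · have := hsep z hzS y hyT
        rw [Real.dist_eq, abs_of_nonpos (by linarith [hzI.2] : z - y ≤ 0)] at this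
        rw [Real.dist_eq, abs_of_nonpos (by linarith : x - y ≤ 0)] at hxy
        linarith [hzI.1]
      · have := hsep x hxS z ⟨hz, hzS⟩
        rw [Real.dist_eq, abs_of_nonpos (by linarith [hzI.1] : x - z ≤ 0)] at this
        rw [Real.dist_eq, abs_of_nonpos (by linarith : x - y ≤ 0)] at hxy
        linarith [hzI.2]
    have hdyx : y - x = d := by
      rw [hd, ← hxy, Real.dist_eq, abs_of_nonpos (by linarith : x - y ≤ 0)]; ring
    obtain ⟨hbm, -, hbg, -⟩ := bridge_all hr0 hr2 hMne hMc hM hgap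
    have hpos : 0 ≤ r / (1 - 2*r) * (y - x) := le_of_lt (mul_pos hρ0 (by linarith))
    have hpx : x - r / (1 - 2*r) * (y - x) ≤ x := by linarith
    have hsubS : M ∩ Set.Icc (x - r / (1 - 2*r) * (y - x)) x ⊆ S := by
      refine chain_lemma hMc hSsubM hScl hTcl hd0 hsep ?_ ⟨x, hxS, ⟨hpx, le_refl x⟩⟩
      intro u v hguv hu hv
      rw [← hdyx]
      exact hbg u v hguv hu hv
    have hpS : x - r / (1 - 2*r) * (y - x) ∈ S := hsubS ⟨hbm, le_refl _, hpx⟩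
    have hdiam : x - (x - r / (1 - 2*r) * (y - x)) ≤ Metric.diam S := by
      have := Metric.dist_le_diam_of_mem hSbd hxS hpS
      rw [Real.dist_eq, abs_of_nonneg (by linarith : (0:ℝ) ≤ x - (x - r / (1 - 2*r) * (y - x)))] at this
      exact this
    rw [← hdyx]
    linarith
  · exact absurd (heq ▸ hxS) hyT.2
  · -- gap (y, x), use right bridge
    have hgap : MGap M y x := by
      refine ⟨hyT.1, hSsubM hxS, hlt, fun z hz hzI => ?_⟩
      by_cases hzS : z ∈ S
      · have := hsep z hzS y hyT
        rw [Real.dist_eq, abs_of_nonneg (by linarith [hzI.1] : 0 ≤ z - y)] at this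
        rw [Real.dist_eq, abs_of_nonneg (by linarith : 0 ≤ x - y)] at hxy
        linarith [hzI.2]
      · have := hsep x hxS z ⟨hz, hzS⟩
        rw [Real.dist_eq, abs_of_nonneg (by linarith [hzI.2] : 0 ≤ x - z)] at this
        rw [Real.dist_eq, abs_of_nonneg (by linarith : 0 ≤ x - y)] at hxy
        linarith [hzI.1]
    have hdyx : x - y = d := by
      rw [hd, ← hxy, Real.dist_eq, abs_of_nonneg (by linarith : 0 ≤ x - y)]
    obtain ⟨-, hbm, -, hbg⟩ := bridge_all hr0 hr2 hMne hMc hM hgap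
    have hpos : 0 ≤ r / (1 - 2*r) * (x - y) := le_of_lt (mul_pos hρ0 (by linarith))
    have hxq : x ≤ x + r / (1 - 2*r) * (x - y) := by linarith
    have hsubS : M ∩ Set.Icc x (x + r / (1 - 2*r) * (x - y)) ⊆ S := by
      refine chain_lemma hMc hSsubM hScl hTcl hd0 hsep ?_ ⟨x, hxS, ⟨le_refl x, hxq⟩⟩
      intro u v hguv hu hv
      rw [← hdyx]
      exact hbg u v hguv hu hv
    have hqS : x + r / (1 - 2*r) * (x - y) ∈ S := hsubS ⟨hbm, hxq, le_refl _⟩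
    have hdiam : (x + r / (1 - 2*r) * (x - y)) - x ≤ Metric.diam S := by
      have := Metric.dist_le_diam_of_mem hSbd hqS hxS
      rw [Real.dist_eq, abs_of_nonneg (by linarith : (0:ℝ) ≤ (x + r / (1 - 2*r) * (x - y)) - x)] at this
      exact this
    rw [← hdyx]
    linarith

end Main

section Upper

variable {r : ℝ} {M : Set ℝ}

lemma upper_chunk (hr0 : 0 < r) (hr2 : r < 1/2) (hMne : M.Nonempty) (hMc : IsCompact M)
    (hM : M = (fun x => r * x) '' M ∪ (fun x => r * x + (1 - r)) '' M) :
    IsChunk M (M ∩ Set.Icc 0 r) ∧ Metric.diam (M ∩ Set.Icc 0 r) = r ∧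
      setDist (M ∩ Set.Icc 0 r) (M \ (M ∩ Set.Icc 0 r)) = 1 - 2*r := by
  obtain ⟨hsub, h0M, h1M⟩ := cantor_basic hr0 hr2 hMne hMc hM
  set S := M ∩ Set.Icc 0 r with hSdef
  have hrM : r ∈ M := by
    have := cantor_mul hM h1M
    simpa using this
  have h1rM : (1:ℝ) - r ∈ M := by
    have := cantor_aff hM h0M
    simpa using this
  have h0S : (0:ℝ) ∈ S := ⟨h0M, le_refl 0, hr0.le⟩
  have hrS : r ∈ S := ⟨hrM, hr0.le, le_refl r⟩
  have hT : M \ S ⊆ Set.Icc (1 - r) 1 := by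
    rintro z ⟨hzM, hzS⟩
    rcases cantor_no_middle hr0 hr2 hMne hMc hM hzM with h | h
    · exact absurd ⟨hzM, (hsub hzM).1, h⟩ hzS
    · exact ⟨h, (hsub hzM).2⟩
  have h1rT : (1:ℝ) - r ∈ M \ S := by
    refine ⟨h1rM, fun hc => ?_⟩
    have := hc.2.2
    linarith
  have hdist : setDist S (M \ S) = 1 - 2*r := by
    apply le_antisymm
    · have := setDist_le hrS h1rT
      rwa [Real.dist_eq, abs_of_nonpos (by linarith : r - (1-r) ≤ 0), neg_sub,
        show 1 - r - r = 1 - 2*r by ring] at this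
    · apply le_csInf (hrS |> fun h => Set.Nonempty.image2 ⟨r, h⟩ ⟨_, h1rT⟩)
      rintro t ⟨a, ha, b, hb, rfl⟩
      have hb' := hT hb
      have ha' := ha.2
      rw [Real.dist_eq, abs_of_nonpos (by linarith [ha'.2, hb'.1] : a - b ≤ 0)]
      linarith [ha'.2, hb'.1]
  have hdiam : Metric.diam S = r := by
    apply le_antisymm
    · calc Metric.diam S ≤ Metric.diam (Set.Icc 0 r) :=
          Metric.diam_mono Set.inter_subset_right (Metric.isBounded_Icc 0 r)
      _ = r := by rw [Real.diam_Icc hr0.le]; ring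
    · have := Metric.dist_le_diam_of_mem ((Metric.isBounded_Icc 0 r).subset
        (Set.inter_subset_right (s := M))) h0S hrS
      rwa [Real.dist_eq, abs_of_nonpos (by linarith : (0:ℝ) - r ≤ 0), neg_sub, sub_zero] at this
  refine ⟨⟨⟨0, r, rfl⟩, ⟨0, h0S⟩, ?_, by rw [hdist]; linarith⟩, hdiam, hdist⟩
  exact ⟨Set.inter_subset_left, fun hc => by
    have := (hc h1rM).2.2
    linarith⟩

end Upper


/-- The middle-`ε` Cantor set, i.e. the attractor of the IFS
`{x ↦ ((1-ε)/2) x, x ↦ ((1-ε)/2) x + (1+ε)/2}` (the unique nonempty compact invariant set),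
has thickness `(1 - ε) / (2ε)`. -/
theorem thickness_middle_cantor_set (ε : ℝ) (hε : ε ∈ Set.Ioo (0 : ℝ) 1) (M : Set ℝ)
    (hMne : M.Nonempty) (hMc : IsCompact M)
    (hM : M = (fun x => (1 - ε) / 2 * x) '' M ∪ (fun x => (1 - ε) / 2 * x + (1 + ε) / 2) '' M) :
    thickness M = ENNReal.ofReal ((1 - ε) / (2 * ε)) := by
  obtain ⟨hε0, hε1⟩ := hε
  have hr0 : 0 < (1 - ε) / 2 := by linarith
  have hr2 : (1 - ε) / 2 < 1/2 := by linarith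
  have hM' : M = (fun x => (1 - ε) / 2 * x) '' M ∪
      (fun x => (1 - ε) / 2 * x + (1 - (1 - ε) / 2)) '' M := by
    have he : (1:ℝ) - (1 - ε) / 2 = (1 + ε) / 2 := by ring
    rw [he]
    exact hM
  have hεeq : 1 - 2 * ((1 - ε) / 2) = ε := by ring
  have hρeq : (1 - ε) / 2 / (1 - 2 * ((1 - ε) / 2)) = (1 - ε) / (2 * ε) := by
    rw [hεeq, div_div]
  obtain ⟨hsub, h0M, h1M⟩ := cantor_basic hr0 hr2 hMne hMc hM'
  obtain ⟨hchunk, hdiam, hdist⟩ := upper_chunk hr0 hr2 hMne hMc hM'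
  have hnotsing : ¬ ∃ x : ℝ, M = {x} := by
    rintro ⟨x, hx⟩
    rw [hx] at h0M h1M
    simp only [Set.mem_singleton_iff] at h0M h1M
    rw [← h0M] at h1M
    norm_num at h1M
  rw [thickness, if_neg hnotsing]
  apply le_antisymm
  · calc (⨅ (S : Set ℝ) (_ : IsChunk M S),
        ENNReal.ofReal (Metric.diam S / setDist S (M \ S)))
      ≤ ENNReal.ofReal (Metric.diam (M ∩ Set.Icc 0 ((1 - ε) / 2)) /
          setDist (M ∩ Set.Icc 0 ((1 - ε) / 2)) (M \ (M ∩ Set.Icc 0 ((1 - ε) / 2)))) :=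
        iInf₂_le _ hchunk
    _ = ENNReal.ofReal ((1 - ε) / (2 * ε)) := by
        rw [hdiam, hdist, ← hρeq, hεeq]
  · refine le_iInf₂ fun S hS => ?_
    apply ENNReal.ofReal_le_ofReal
    have hlow := chunk_lower hr0 hr2 hMne hMc hM' hS
    have hd0 : 0 < setDist S (M \ S) := hS.2.2.2
    rw [le_div_iff₀ hd0, ← hρeq]
    exact hlow
end

section
/- Let C ⊆ ℝ be a compact set with convex hull [0,1] and thickness τ := τ(C) > 0. Then for every β ∈ (0,1), the set S := (−∞, 0) ∪ C ∪ (1, +∞) is (1/(τβ), β, 0, β/2)-winning for the potential game. -/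
/-- The radius of an optional ball (center, radius) pair; `0` for `none`. -/
noncomputable def optRad (o : Option (ℝ × ℝ)) : ℝ := (o.map Prod.snd).getD 0

/-- Legality of a move of Alice in the `(α, β, c, ρ)`-potential game when Bob's current
radius is `r`: Alice erases the countable collection of closed balls recorded in the
`some` entries of `Amv` (so she may erase finitely many balls, or pass); all erased balls
have positive radius; if `c = 0` she erases at most one ball, of radius at most `α * r`,
and if `c > 0` the radii satisfy `∑ ρᵢ ^ c ≤ (α * r) ^ c`. -/
def AliceLegal (α c r : ℝ) (Amv : ℕ → Option (ℝ × ℝ)) : Prop :=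
  (∀ i p, Amv i = some p → 0 < p.2) ∧
  (if c = 0 then
      (∀ i j p q, Amv i = some p → Amv j = some q → i = j) ∧
      (∀ i p, Amv i = some p → p.2 ≤ α * r)
    else ∑' i, ENNReal.ofReal (optRad (Amv i) ^ c) ≤ ENNReal.ofReal ((α * r) ^ c))

/-- Legality of Bob's play in the `(α, β, c, ρ)`-potential game: Bob plays closed balls
`B[xₘ, ρₘ]` (recorded as pairs `(xₘ, ρₘ)`) with `ρ₀ ≥ ρ`, `Bₘ ⊆ Bₘ₋₁`, `ρₘ ≥ β * ρₘ₋₁`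
and `ρₘ → 0`. -/
def BobLegal (β ρ : ℝ) (B : ℕ → ℝ × ℝ) : Prop :=
  (∀ m, 0 < (B m).2) ∧ ρ ≤ (B 0).2 ∧
  (∀ m, Metric.closedBall (B (m + 1)).1 (B (m + 1)).2 ⊆ Metric.closedBall (B m).1 (B m).2) ∧
  (∀ m, β * (B m).2 ≤ (B (m + 1)).2) ∧
  Filter.Tendsto (fun m => (B m).2) Filter.atTop (nhds 0)

/-- The history of Bob's moves up to and including turn `m`. -/
def hist (B : ℕ → ℝ × ℝ) (m : ℕ) : List (ℝ × ℝ) := List.ofFn (fun i : Fin (m + 1) => B i)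

/-- A point `x` is erased by Alice's strategy `σ` along Bob's play `B` if it belongs to one
of the balls erased by Alice at some turn. -/
def erasedBy (σ : List (ℝ × ℝ) → ℕ → Option (ℝ × ℝ)) (B : ℕ → ℝ × ℝ) (x : ℝ) : Prop :=
  ∃ m i p, σ (hist B m) i = some p ∧ x ∈ Metric.closedBall p.1 p.2

/-- `S ⊆ ℝ` is `(α, β, c, ρ)`-winning for the potential game: Alice has a strategy
(assigning to each history of Bob's moves a legal collection of erased balls) guaranteeing
that for every legal play of Bob, if the outcome `x∞ = ⋂ₘ Bₘ` is not erased then `x∞ ∈ S`. -/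
def IsWinning (α β c ρ : ℝ) (S : Set ℝ) : Prop :=
  ∃ σ : List (ℝ × ℝ) → ℕ → Option (ℝ × ℝ),
    ∀ B : ℕ → ℝ × ℝ, BobLegal β ρ B →
      (∀ m, AliceLegal α c (B m).2 (σ (hist B m))) ∧
      ∀ x : ℝ, (∀ m, x ∈ Metric.closedBall (B m).1 (B m).2) → ¬ erasedBy σ B x → x ∈ S

namespace FilledThickAux


def IsGap (C : Set ℝ) (p : ℝ × ℝ) : Prop :=
  p.1 ∈ C ∧ p.2 ∈ C ∧ p.1 < p.2 ∧ ∀ x ∈ Set.Ioo p.1 p.2, x ∉ C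

lemma gap_disjoint {C : Set ℝ} {p q : ℝ × ℝ} (hp : IsGap C p) (hq : IsGap C q)
    (h : p.1 < q.1) : p.2 ≤ q.1 := by
  by_contra hlt
  exact hp.2.2.2 q.1 ⟨h, lt_of_not_ge hlt⟩ hq.1

lemma gap_eq {C : Set ℝ} {p q : ℝ × ℝ} (hp : IsGap C p) (hq : IsGap C q)
    (h : p.1 = q.1) : p = q := by
  rcases lt_trichotomy p.2 q.2 with h2 | h2 | h2
  · exact absurd hp.2.1 (hq.2.2.2 p.2 ⟨h ▸ hp.2.2.1, h2⟩)
  · exact Prod.ext h h2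
  · exact absurd hq.2.1 (hp.2.2.2 q.2 ⟨h ▸ hq.2.2.1, h2⟩)

lemma finite_sep {A : Set ℝ} {δ : ℝ} (hδ : 0 < δ) (hA : A ⊆ Set.Icc 0 1)
    (hsep : ∀ a ∈ A, ∀ b ∈ A, a ≠ b → δ ≤ |a - b|) : A.Finite := by
  have key : ∀ a ∈ A, ∀ b ∈ A, a < b → ⌊a / δ⌋ < ⌊b / δ⌋ := by
    intro a ha b hb hlt
    have hd : δ ≤ |a - b| := hsep a ha b hb (ne_of_lt hlt)
    rw [abs_sub_comm, abs_of_pos (by linarith)] at hd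
    have hstep : a / δ + 1 ≤ b / δ := by
      rw [le_div_iff₀ hδ, add_mul, div_mul_cancel₀ _ (ne_of_gt hδ), one_mul]
      linarith
    have : ⌊a / δ⌋ + 1 ≤ ⌊b / δ⌋ := by
      rw [← Int.floor_add_one]
      exact Int.floor_le_floor hstep
    omega
  have hinj : Set.InjOn (fun a : ℝ => ⌊a / δ⌋) A := by
    intro a ha b hb hab
    by_contra hne
    rcases lt_or_gt_of_ne hne with hlt | hlt
    · exact absurd hab (ne_of_lt (key a ha b hb hlt))
    · exact absurd hab.symm (ne_of_lt (key b hb a ha hlt))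
  have him : ((fun a : ℝ => ⌊a / δ⌋) '' A).Finite := by
    apply Set.Finite.subset (Set.finite_Icc (0:ℤ) ⌈1/δ⌉)
    rintro _ ⟨a, ha, rfl⟩
    have h0 : (0:ℝ) ≤ a := (hA ha).1
    have h1 : a ≤ 1 := (hA ha).2
    refine ⟨by positivity, ?_⟩
    have : a / δ ≤ 1 / δ := by gcongr
    exact (Int.floor_le_floor this).trans (Int.floor_le_ceil (1/δ))
  exact Set.Finite.of_finite_image him hinj

lemma exists_max_gap {C : Set ℝ} (hC1 : C ⊆ Set.Icc 0 1) {P : Set (ℝ × ℝ)}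
    (hP : ∀ p ∈ P, IsGap C p) (hne : P.Nonempty) :
    ∃ p ∈ P, ∀ q ∈ P, q.2 - q.1 ≤ p.2 - p.1 := by
  obtain ⟨p0, hp0⟩ := hne
  set len : ℝ × ℝ → ℝ := fun p => p.2 - p.1 with hlen
  have hlen1 : ∀ p ∈ P, len p ≤ 1 := by
    intro p hp
    have h := hP p hp
    have := (hC1 h.1).1
    have := (hC1 h.2.1).2
    simp only [hlen]; linarith
  have hlenpos : ∀ p ∈ P, 0 < len p := fun p hp => sub_pos.mpr (hP p hp).2.2.1
  set L : ℝ := sSup (len '' P) with hL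
  have hbdd : BddAbove (len '' P) := by
    refine ⟨1, ?_⟩; rintro _ ⟨p, hp, rfl⟩; exact hlen1 p hp
  have hLpos : 0 < L := lt_of_lt_of_le (hlenpos p0 hp0)
    (le_csSup hbdd ⟨p0, hp0, rfl⟩)
  obtain ⟨_, ⟨p1, hp1, rfl⟩, hp1L⟩ := exists_lt_of_lt_csSup
    (Set.Nonempty.image len ⟨p0, hp0⟩) (by linarith : L / 2 < L)
  set F : Set (ℝ × ℝ) := {p ∈ P | L / 2 < len p} with hF
  have hFne : F.Nonempty := ⟨p1, hp1, hp1L⟩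
  have hfin : F.Finite := by
    have hinj : Set.InjOn Prod.fst F := by
      intro p hp q hq h
      exact gap_eq (hP p hp.1) (hP q hq.1) h
    refine Set.Finite.of_finite_image ?_ hinj
    apply finite_sep (by linarith : (0:ℝ) < L / 2)
    · rintro _ ⟨p, hp, rfl⟩; exact hC1 (hP p hp.1).1
    · rintro _ ⟨p, hp, rfl⟩ _ ⟨q, hq, rfl⟩ hne'
      have hpq : p ≠ q := fun h => hne' (congrArg Prod.fst h)
      have h1 : p.1 ≠ q.1 := hne'
      rcases lt_or_gt_of_ne h1 with hlt | hlt
      · have := gap_disjoint (hP p hp.1) (hP q hq.1) hlt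
        have := hp.2
        rw [abs_sub_comm, abs_of_pos (by linarith)]
        simp only [hlen] at *; linarith
      · have := gap_disjoint (hP q hq.1) (hP p hp.1) hlt
        have := hq.2
        rw [abs_of_pos (by linarith)]
        simp only [hlen] at *; linarith
  obtain ⟨p, hpF, hmax⟩ := Set.exists_max_image F len hfin hFne
  refine ⟨p, hpF.1, ?_⟩
  intro q hq
  by_cases hqL : L / 2 < len q
  · exact hmax q ⟨hq, hqL⟩
  · have : len q ≤ L / 2 := le_of_not_gt hqL
    have := hpF.2
    linarith



lemma le_setDist {S T : Set ℝ} (hS : S.Nonempty) (hT : T.Nonempty) {d : ℝ}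
    (hd : ∀ s ∈ S, ∀ t ∈ T, d ≤ dist s t) : d ≤ setDist S T := by
  apply le_csInf (Set.Nonempty.image2 hS hT)
  rintro _ ⟨s, hs, t, ht, rfl⟩
  exact hd s hs t ht

lemma chunk_bound {C : Set ℝ} {τ : ℝ} (hτC : thickness C = ENNReal.ofReal τ)
    (hns : ¬ ∃ x : ℝ, C = {x}) {S : Set ℝ} (hS : IsChunk C S) :
    τ * setDist S (C \ S) ≤ Metric.diam S := by
  unfold thickness at hτC
  rw [if_neg hns] at hτC
  have h := iInf₂_le (f := fun (S : Set ℝ) (_ : IsChunk C S) =>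
    ENNReal.ofReal (Metric.diam S / setDist S (C \ S))) S hS
  rw [hτC] at h
  have hd : 0 < setDist S (C \ S) := hS.2.2.2
  have h2 : τ ≤ Metric.diam S / setDist S (C \ S) :=
    (ENNReal.ofReal_le_ofReal_iff (by positivity)).mp h
  rw [le_div_iff₀ hd] at h2
  exact h2

/-- The bridge inequality: the distance between two gaps is at least τ times the
shorter gap length. -/
lemma bridge {C : Set ℝ} {τ : ℝ} (hτC : thickness C = ENNReal.ofReal τ)
    (hns : ¬ ∃ x : ℝ, C = {x}) (hτ : 0 < τ) {p q : ℝ × ℝ}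
    (hp : IsGap C p) (hq : IsGap C q) (hle : p.2 ≤ q.1) :
    τ * min (p.2 - p.1) (q.2 - q.1) ≤ q.1 - p.2 := by
  set S : Set ℝ := C ∩ Set.Icc p.2 q.1 with hStm
  have hmem : p.2 ∈ S := ⟨hp.2.1, le_refl _, hle⟩
  have hnotin : p.1 ∉ S := fun h => absurd h.2.1 (not_le.mpr hp.2.2.1)
  have hm : 0 < min (p.2 - p.1) (q.2 - q.1) :=
    lt_min (sub_pos.mpr hp.2.2.1) (sub_pos.mpr hq.2.2.1)
  have hdistlb : ∀ s ∈ S, ∀ t ∈ C \ S, min (p.2 - p.1) (q.2 - q.1) ≤ dist s t := by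
    rintro s ⟨hsC, hs1, hs2⟩ t ⟨htC, htS⟩
    have ht : t < p.2 ∨ q.1 < t := by
      by_contra hcon
      push_neg at hcon
      exact htS ⟨htC, hcon.1, hcon.2⟩
    rw [Real.dist_eq]
    rcases ht with ht | ht
    · have : t ≤ p.1 := by
        by_contra hcon
        exact hp.2.2.2 t ⟨lt_of_not_ge hcon, ht⟩ htC
      calc min (p.2 - p.1) (q.2 - q.1) ≤ p.2 - p.1 := min_le_left _ _
        _ ≤ s - t := by linarith
        _ ≤ |s - t| := le_abs_self _
    · have : q.2 ≤ t := by
        by_contra hcon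
        exact hq.2.2.2 t ⟨ht, lt_of_not_ge hcon⟩ htC
      calc min (p.2 - p.1) (q.2 - q.1) ≤ q.2 - q.1 := min_le_right _ _
        _ ≤ t - s := by linarith
        _ ≤ |s - t| := by rw [abs_sub_comm]; exact le_abs_self _
  have hCSne : (C \ S).Nonempty := ⟨p.1, hp.1, hnotin⟩
  have hsd : min (p.2 - p.1) (q.2 - q.1) ≤ setDist S (C \ S) :=
    le_setDist ⟨p.2, hmem⟩ hCSne hdistlb
  have hchunk : IsChunk C S := by
    refine ⟨⟨p.2, q.1, rfl⟩, ⟨p.2, hmem⟩, ?_, lt_of_lt_of_le hm hsd⟩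
    exact (Set.ssubset_iff_of_subset Set.inter_subset_left).mpr ⟨p.1, hp.1, hnotin⟩
  have hdiam : Metric.diam S ≤ q.1 - p.2 := by
    calc Metric.diam S ≤ Metric.diam (Set.Icc p.2 q.1) :=
      Metric.diam_mono Set.inter_subset_right (Metric.isBounded_Icc _ _)
    _ = q.1 - p.2 := Real.diam_Icc hle
  calc τ * min (p.2 - p.1) (q.2 - q.1) ≤ τ * setDist S (C \ S) := by
        apply mul_le_mul_of_nonneg_left hsd (le_of_lt hτ)
    _ ≤ Metric.diam S := chunk_bound hτC hns hchunk
    _ ≤ q.1 - p.2 := hdiam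

/-- Edge inequality: a gap of `C ⊆ [0,1]` with `0 ∈ C` has left endpoint at least
`τ` times its length. -/
lemma edge {C : Set ℝ} {τ : ℝ} (hτC : thickness C = ENNReal.ofReal τ)
    (hns : ¬ ∃ x : ℝ, C = {x}) (hτ : 0 < τ) (h0 : (0:ℝ) ∈ C) (hC1 : C ⊆ Set.Icc 0 1)
    {p : ℝ × ℝ} (hp : IsGap C p) : τ * (p.2 - p.1) ≤ p.1 := by
  set S : Set ℝ := C ∩ Set.Icc 0 p.1 with hStm
  have ha0 : 0 ≤ p.1 := (hC1 hp.1).1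
  have hmem : (0:ℝ) ∈ S := ⟨h0, le_refl _, ha0⟩
  have hnotin : p.2 ∉ S := fun h => absurd h.2.2 (not_le.mpr hp.2.2.1)
  have hm : 0 < p.2 - p.1 := sub_pos.mpr hp.2.2.1
  have hdistlb : ∀ s ∈ S, ∀ t ∈ C \ S, p.2 - p.1 ≤ dist s t := by
    rintro s ⟨hsC, hs1, hs2⟩ t ⟨htC, htS⟩
    have ht : p.1 < t := by
      by_contra hcon
      exact htS ⟨htC, (hC1 htC).1, le_of_not_gt hcon⟩
    have : p.2 ≤ t := by
      by_contra hcon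
      exact hp.2.2.2 t ⟨ht, lt_of_not_ge hcon⟩ htC
    rw [Real.dist_eq]
    calc p.2 - p.1 ≤ t - s := by linarith
      _ ≤ |s - t| := by rw [abs_sub_comm]; exact le_abs_self _
  have hCSne : (C \ S).Nonempty := ⟨p.2, hp.2.1, hnotin⟩
  have hsd : p.2 - p.1 ≤ setDist S (C \ S) := le_setDist ⟨0, hmem⟩ hCSne hdistlb
  have hchunk : IsChunk C S := by
    refine ⟨⟨0, p.1, rfl⟩, ⟨0, hmem⟩, ?_, lt_of_lt_of_le hm hsd⟩
    exact (Set.ssubset_iff_of_subset Set.inter_subset_left).mpr ⟨p.2, hp.2.1, hnotin⟩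
  have hdiam : Metric.diam S ≤ p.1 := by
    calc Metric.diam S ≤ Metric.diam (Set.Icc 0 p.1) :=
      Metric.diam_mono Set.inter_subset_right (Metric.isBounded_Icc _ _)
    _ = p.1 - 0 := Real.diam_Icc ha0
    _ = p.1 := by ring
  calc τ * (p.2 - p.1) ≤ τ * setDist S (C \ S) :=
        mul_le_mul_of_nonneg_left hsd (le_of_lt hτ)
    _ ≤ Metric.diam S := chunk_bound hτC hns hchunk
    _ ≤ p.1 := hdiam

lemma exists_gap {C : Set ℝ} (hC : IsCompact C) (h0 : (0:ℝ) ∈ C) (h1 : (1:ℝ) ∈ C)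
    {x : ℝ} (hx0 : 0 ≤ x) (hx1 : x ≤ 1) (hxC : x ∉ C) :
    ∃ p : ℝ × ℝ, IsGap C p ∧ x ∈ Set.Ioo p.1 p.2 := by
  set a := sSup (C ∩ Set.Iic x) with ha
  set b := sInf (C ∩ Set.Ici x) with hb
  have hca : IsCompact (C ∩ Set.Iic x) := hC.inter_right isClosed_Iic
  have hcb : IsCompact (C ∩ Set.Ici x) := hC.inter_right isClosed_Ici
  have hane : (C ∩ Set.Iic x).Nonempty := ⟨0, h0, hx0⟩
  have hbne : (C ∩ Set.Ici x).Nonempty := ⟨1, h1, hx1⟩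
  have haMem : a ∈ C ∩ Set.Iic x := hca.sSup_mem hane
  have hbMem : b ∈ C ∩ Set.Ici x := hcb.sInf_mem hbne
  have hax : a < x := lt_of_le_of_ne haMem.2 (fun h => hxC (h ▸ haMem.1))
  have hxb : x < b := lt_of_le_of_ne hbMem.2 (fun h => hxC (by rw [h]; exact hbMem.1))
  refine ⟨(a, b), ⟨haMem.1, hbMem.1, lt_trans hax hxb, ?_⟩, hax, hxb⟩
  intro y hy hyC
  rcases le_or_gt y x with h | h
  · exact absurd (le_csSup hca.bddAbove ⟨hyC, h⟩) (not_le.mpr hy.1)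
  · exact absurd (csInf_le hcb.bddBelow ⟨hyC, h.le⟩) (not_le.mpr hy.2)



def gapSet (C : Set ℝ) (α : ℝ) (q : ℝ × ℝ) : Set (ℝ × ℝ) :=
  {p | IsGap C p ∧ (Set.Ioo p.1 p.2 ∩ Metric.closedBall q.1 q.2).Nonempty ∧
    p.2 - p.1 ≤ 2 * α * q.2}

open Classical in
noncomputable def strat (C : Set ℝ) (α : ℝ) (q : ℝ × ℝ) : Option (ℝ × ℝ) :=
  if h : ∃ p ∈ gapSet C α q, ∀ p' ∈ gapSet C α q, p'.2 - p'.1 ≤ p.2 - p.1 then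
    some ((h.choose.1 + h.choose.2) / 2, (h.choose.2 - h.choose.1) / 2)
  else none

lemma strat_mem {C : Set ℝ} {α : ℝ} {q p : ℝ × ℝ} (h : strat C α q = some p) :
    ∃ g ∈ gapSet C α q, (∀ g' ∈ gapSet C α q, g'.2 - g'.1 ≤ g.2 - g.1) ∧
      p = ((g.1 + g.2) / 2, (g.2 - g.1) / 2) := by
  unfold strat at h
  split_ifs at h with hc
  · exact ⟨hc.choose, hc.choose_spec.1, hc.choose_spec.2, (Option.some_inj.mp h).symm⟩

lemma strat_some {C : Set ℝ} {α : ℝ} {q : ℝ × ℝ}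
    (hmax : ∃ p ∈ gapSet C α q, ∀ p' ∈ gapSet C α q, p'.2 - p'.1 ≤ p.2 - p.1) :
    ∃ p, strat C α q = some p := by
  unfold strat
  rw [dif_pos hmax]
  exact ⟨_, rfl⟩

lemma hist_getLastD (B : ℕ → ℝ × ℝ) (m : ℕ) (d : ℝ × ℝ) :
    (hist B m).getLastD d = B m := by
  induction m with
  | zero => simp [hist]
  | succ n ih =>
    have : hist B (n + 1) = (hist B n).concat (B (n + 1)) := by
      unfold hist
      rw [List.ofFn_succ']
      congr 1
    rw [this]
    simp [List.getLastD_concat]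

end FilledThickAux

/-- If `C ⊆ ℝ` is compact with convex hull `[0,1]` and thickness `τ > 0`, then for every
`β ∈ (0,1)` the set `S = (-∞,0) ∪ C ∪ (1,∞)` is `(1/(τβ), β, 0, β/2)`-winning for the
potential game. -/
theorem filled_thick_set_is_winning (C : Set ℝ) (hC : IsCompact C)
    (hhull : convexHull ℝ C = Set.Icc (0 : ℝ) 1)
    (τ : ℝ) (hτC : thickness C = ENNReal.ofReal τ) (hτ : 0 < τ)
    (β : ℝ) (hβ : β ∈ Set.Ioo (0 : ℝ) 1) :
    IsWinning (1 / (τ * β)) β 0 (β / 2) (Set.Iio (0 : ℝ) ∪ C ∪ Set.Ioi (1 : ℝ)) := by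
  classical
  obtain ⟨hβ0, hβ1⟩ := hβ
  have hCI : C ⊆ Set.Icc 0 1 := hhull ▸ subset_convexHull ℝ C
  have hCne : C.Nonempty := by
    rw [← convexHull_nonempty_iff (𝕜 := ℝ), hhull]
    exact ⟨0, by norm_num⟩
  have hIm : sInf C ∈ C := hC.sInf_mem hCne
  have hSm : sSup C ∈ C := hC.sSup_mem hCne
  have hsub : convexHull ℝ C ⊆ Set.Icc (sInf C) (sSup C) :=
    convexHull_min (fun y hy => ⟨csInf_le hC.bddBelow hy, le_csSup hC.bddAbove hy⟩)
      (convex_Icc _ _)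
  have h0 : (0:ℝ) ∈ C := by
    have h01 : (0:ℝ) ∈ convexHull ℝ C := by rw [hhull]; norm_num
    have h02 := (hsub h01).1
    have h03 := (hCI hIm).1
    have : sInf C = 0 := le_antisymm h02 h03
    rwa [← this]
  have h1 : (1:ℝ) ∈ C := by
    have h01 : (1:ℝ) ∈ convexHull ℝ C := by rw [hhull]; norm_num
    have h02 := (hsub h01).2
    have h03 := (hCI hSm).2
    have : sSup C = 1 := le_antisymm h03 h02
    rwa [← this]
  have hns : ¬ ∃ x : ℝ, C = {x} := by
    rintro ⟨y, rfl⟩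
    have h0' : (0:ℝ) = y := h0
    have h1' : (1:ℝ) = y := h1
    norm_num [← h0'] at h1'
  set α := 1 / (τ * β) with hαdef
  have hα0 : 0 < α := by rw [hαdef]; positivity
  have hαβ : α * β = 1 / τ := by
    rw [hαdef]; field_simp
  set σ : List (ℝ × ℝ) → ℕ → Option (ℝ × ℝ) :=
    fun l i => if i = 0 then FilledThickAux.strat C α (l.getLastD (0, 1)) else none
    with hσdef
  refine ⟨σ, ?_⟩
  intro B hB
  obtain ⟨hBpos, hBρ, hBsub, hBβ, hB0⟩ := hB
  constructor
  · -- legality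
    intro m
    refine ⟨?_, ?_⟩
    · intro i p hp
      simp only [hσdef] at hp
      by_cases hi : i = 0
      · rw [if_pos hi, FilledThickAux.hist_getLastD] at hp
        obtain ⟨g, hg, -, rfl⟩ := FilledThickAux.strat_mem hp
        have := hg.1.2.2.1
        simp only
        linarith
      · rw [if_neg hi] at hp; exact absurd hp (by simp)
    · rw [if_pos rfl]
      refine ⟨?_, ?_⟩
      · intro i j p' q' hi hj
        simp only [hσdef] at hi hj
        by_cases h1' : i = 0
        · by_cases h2' : j = 0
          · omega
          · rw [if_neg h2'] at hj; exact absurd hj (by simp)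
        · rw [if_neg h1'] at hi; exact absurd hi (by simp)
      · intro i p hp
        simp only [hσdef] at hp
        by_cases hi : i = 0
        · rw [if_pos hi, FilledThickAux.hist_getLastD] at hp
          obtain ⟨g, hg, -, rfl⟩ := FilledThickAux.strat_mem hp
          have hlen := hg.2.2
          simp only
          linarith
        · rw [if_neg hi] at hp; exact absurd hp (by simp)
  · -- main part
    intro x hx hnot
    simp only [erasedBy, not_exists] at hnot
    by_contra hxS
    simp only [Set.mem_union, Set.mem_Iio, Set.mem_Ioi] at hxS
    push_neg at hxS
    obtain ⟨⟨hx0, hxC⟩, hx1⟩ := hxS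
    have hx0' : 0 ≤ x := hx0
    have hx1' : x ≤ 1 := hx1
    obtain ⟨g, hgap, hxg⟩ := FilledThickAux.exists_gap hC h0 h1 hx0' hx1' hxC
    set lam := g.2 - g.1 with hlam
    have hlam0 : 0 < lam := sub_pos.mpr hgap.2.2.1
    have hedge : τ * lam ≤ g.1 := FilledThickAux.edge hτC hns hτ h0 hCI hgap
    have hg2le : g.2 ≤ 1 := (hCI hgap.2.1).2
    have hlam1 : lam ≤ 1 / τ := by
      rw [le_div_iff₀ hτ]
      nlinarith
    have hev : ∃ m, ¬ (lam ≤ 2 * α * (B m).2) := by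
      obtain ⟨m, hm⟩ :=
        (hB0.eventually_lt_const (show (0:ℝ) < lam / (2 * α) by positivity)).exists
      refine ⟨m, not_le.mpr ?_⟩
      rw [lt_div_iff₀ (by positivity)] at hm
      nlinarith
    set N := Nat.find hev with hN
    have hNspec : ¬ (lam ≤ 2 * α * (B N).2) := Nat.find_spec hev
    have hNpos : 0 < N := by
      rcases Nat.eq_zero_or_pos N with hz | hz
      · exfalso
        apply hNspec
        rw [hz]
        have hρ0 : β / 2 ≤ (B 0).2 := hBρ
        calc lam ≤ 1 / τ := hlam1
          _ = α * β := hαβ.symm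
          _ = 2 * α * (β / 2) := by ring
          _ ≤ 2 * α * (B 0).2 := by nlinarith
      · exact hz
    obtain ⟨m, hmN⟩ : ∃ m, m + 1 = N := ⟨N - 1, Nat.succ_pred_eq_of_pos hNpos⟩
    have hok : lam ≤ 2 * α * (B m).2 := not_not.mp (Nat.find_min hev (by omega))
    have hfail : 2 * α * (B (m + 1)).2 < lam := by
      rw [hmN]; exact lt_of_not_ge hNspec
    have hcand : g ∈ FilledThickAux.gapSet C α (B m) := ⟨hgap, ⟨x, hxg, hx m⟩, hok⟩
    obtain ⟨pmax, hpmaxP, hpmax⟩ := FilledThickAux.exists_max_gap hCI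
      (fun p hp => hp.1) ⟨g, hcand⟩
    obtain ⟨p, hp⟩ := FilledThickAux.strat_some ⟨pmax, hpmaxP, hpmax⟩
    obtain ⟨g', hg'P, hg'max, hpeq⟩ := FilledThickAux.strat_mem hp
    have hσval : σ (hist B m) 0 = some p := by
      simp only [hσdef, if_pos rfl, FilledThickAux.hist_getLastD]
      exact hp
    have hxnot : x ∉ Metric.closedBall p.1 p.2 := fun hmem => hnot m 0 p ⟨hσval, hmem⟩
    have hball : Metric.closedBall p.1 p.2 = Set.Icc g'.1 g'.2 := by
      rw [hpeq, Real.closedBall_eq_Icc]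
      congr 1 <;> simp <;> ring
    have hxIcc : x ∉ Set.Icc g'.1 g'.2 := hball ▸ hxnot
    have hglen : lam ≤ g'.2 - g'.1 := hg'max g hcand
    have hne' : g ≠ g' := by
      rintro rfl
      exact hxIcc ⟨le_of_lt hxg.1, le_of_lt hxg.2⟩
    have hfst : g.1 ≠ g'.1 := fun h => hne' (FilledThickAux.gap_eq hgap hg'P.1 h)
    obtain ⟨z, hz1, hz2⟩ := hg'P.2.1
    have hxm := hx m
    rw [Metric.mem_closedBall, Real.dist_eq] at hxm hz2
    have hxz : |x - z| ≤ 2 * (B m).2 := by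
      calc |x - z| ≤ |x - (B m).1| + |(B m).1 - z| := abs_sub_le _ _ _
        _ ≤ 2 * (B m).2 := by
          rw [abs_sub_comm (B m).1 z]
          linarith
    have hτlam : τ * lam < 2 * (B m).2 := by
      rcases lt_or_gt_of_ne hfst with hlt | hlt
      · have hdisj := FilledThickAux.gap_disjoint hgap hg'P.1 hlt
        have hbr := FilledThickAux.bridge hτC hns hτ hgap hg'P.1 hdisj
        rw [← hlam, min_eq_left hglen] at hbr
        have hzx : τ * lam < z - x := by
          have h1' := hz1.1
          have h2' := hxg.2
          linarith
        have : z - x ≤ |x - z| := by rw [abs_sub_comm]; exact le_abs_self _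
        linarith
      · have hdisj := FilledThickAux.gap_disjoint hg'P.1 hgap hlt
        have hbr := FilledThickAux.bridge hτC hns hτ hg'P.1 hgap hdisj
        rw [← hlam, min_eq_right hglen] at hbr
        have hzx : τ * lam < x - z := by
          have h1' := hz1.2
          have h2' := hxg.1
          linarith
        have : x - z ≤ |x - z| := le_abs_self _
        linarith
    have hother : 2 * (B m).2 < τ * lam := by
      have hstep := hBβ m
      have h1' : α * (β * (B m).2) ≤ α * (B (m + 1)).2 :=
        mul_le_mul_of_nonneg_left hstep hα0.le
      have h2' : 2 * (α * β) * (B m).2 < lam := by nlinarith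
      rw [hαβ] at h2'
      have h3' : τ * (2 * (1 / τ) * (B m).2) < τ * lam := mul_lt_mul_of_pos_left h2' hτ
      have h4' : 2 * (B m).2 = τ * (2 * (1 / τ) * (B m).2) := by field_simp
      rw [h4']
      exact h3'
    linarith
end

section
/- Let J be a countable index set, let β ∈ (0,1), c > 0, ρ > 0, and for each j ∈ J let S_j ⊆ ℝ be an (α_j, β, c, ρ)-winning set for the potential game. If the series Σ_{j ∈ J} α_j^c converges and α > 0 is defined by α^c = Σ_{j ∈ J} α_j^c, then S := ⋂_{j ∈ J} S_j is (α, β, c, ρ)-winning. -/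
/-- **Countable intersection property.** If `J` is countable and each `S j` is
`(α j, β, c, ρ)`-winning for the potential game with `c > 0`, and `α > 0` satisfies
`α ^ c = ∑ j, (α j) ^ c` (the series being convergent), then `⋂ j, S j` is
`(α, β, c, ρ)`-winning. -/
theorem isWinning_iInter {J : Type*} [Countable J] (β c ρ : ℝ)
    (hβ : β ∈ Set.Ioo (0 : ℝ) 1) (hc : 0 < c) (hρ : 0 < ρ)
    (αj : J → ℝ) (hαj : ∀ j, 0 < αj j) (S : J → Set ℝ)
    (hS : ∀ j, IsWinning (αj j) β c ρ (S j))
    (hsum : Summable fun j => αj j ^ c)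
    (α : ℝ) (hα : 0 < α) (hαeq : α ^ c = ∑' j, αj j ^ c) :
    IsWinning α β c ρ (⋂ j, S j) := by
  classical
  haveI : Encodable J := Encodable.ofCountable J
  choose σ hσ using hS
  refine ⟨fun h n =>
    (Encodable.decode₂ J (Nat.unpair n).1).bind (fun j => σ j h (Nat.unpair n).2), ?_⟩
  intro B hB
  have hleg : ∀ j m, AliceLegal (αj j) c (B m).2 (σ j (hist B m)) := fun j => (hσ j B hB).1
  have hwin := fun j => (hσ j B hB).2
  constructor
  · intro m
    have hr : 0 < (B m).2 := hB.1 m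
    set r := (B m).2 with hrdef
    constructor
    · intro i p hp
      simp only [Option.bind_eq_some_iff] at hp
      obtain ⟨j, _, hp⟩ := hp
      exact (hleg j m).1 _ _ hp
    · rw [if_neg hc.ne']
      set G : ℕ → ℕ → ENNReal := fun a b =>
        ENNReal.ofReal (optRad ((Encodable.decode₂ J a).bind
          (fun j => σ j (hist B m) b)) ^ c) with hG
      have key : (∑' n : ℕ, ENNReal.ofReal (optRad ((Encodable.decode₂ J (Nat.unpair n).1).bind
          (fun j => σ j (hist B m) (Nat.unpair n).2)) ^ c))
          = ∑' a : ℕ, ∑' b : ℕ, G a b := by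
        rw [← ENNReal.tsum_prod (f := G), ← Nat.pairEquiv.tsum_eq
          (fun n => G (Nat.unpair n).1 (Nat.unpair n).2)]
        simp [Nat.pairEquiv, Function.uncurry, Nat.unpair_pair]
        refine tsum_congr fun p => ?_
        show G (Nat.unpair (Nat.pair p.1 p.2)).1 (Nat.unpair (Nat.pair p.1 p.2)).2 = _
        rw [Nat.unpair_pair]
      rw [key]
      have hsupp : ∀ a ∉ Set.range (Encodable.encode : J → ℕ), (∑' b : ℕ, G a b) = 0 := by
        intro a ha
        have hd : Encodable.decode₂ J a = none := by
          rcases h : Encodable.decode₂ J a with _ | j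
          · rfl
          · exact absurd ⟨j, Encodable.mem_decode₂.1 (by simp [h])⟩ ha
        simp [hG, hd, optRad, Real.zero_rpow hc.ne']
      have hEq : (∑' j : J, ∑' b : ℕ, G (Encodable.encode j) b) = ∑' a : ℕ, ∑' b : ℕ, G a b :=
        Function.Injective.tsum_eq Encodable.encode_injective (fun a ha =>
          not_not.1 fun hcon => ha (hsupp a hcon))
      rw [← hEq]
      have hbound : ∀ j : J, (∑' b : ℕ, G (Encodable.encode j) b)
          ≤ ENNReal.ofReal ((αj j * r) ^ c) := by
        intro j
        have h2 := (hleg j m).2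
        rw [if_neg hc.ne'] at h2
        simpa [hG, Encodable.decode₂_encode] using h2
      calc (∑' j : J, ∑' b : ℕ, G (Encodable.encode j) b)
          ≤ ∑' j : J, ENNReal.ofReal ((αj j * r) ^ c) := ENNReal.tsum_le_tsum hbound
        _ = ENNReal.ofReal (∑' j : J, (αj j * r) ^ c) := by
            rw [ENNReal.ofReal_tsum_of_nonneg]
            · exact fun j => Real.rpow_nonneg (mul_nonneg (hαj j).le hr.le) c
            · have : (fun j => (αj j * r) ^ c) = fun j => αj j ^ c * r ^ c := by
                funext j; exact Real.mul_rpow (hαj j).le hr.le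
              rw [this]
              exact hsum.mul_right _
        _ = ENNReal.ofReal ((α * r) ^ c) := by
            congr 1
            have : (fun j => (αj j * r) ^ c) = fun j => αj j ^ c * r ^ c := by
              funext j; exact Real.mul_rpow (hαj j).le hr.le
            rw [this, tsum_mul_right, ← hαeq, ← Real.mul_rpow hα.le hr.le]
  · intro x hx hne
    refine Set.mem_iInter.2 fun j => ?_
    refine hwin j x hx ?_
    rintro ⟨m, i, p, hp, hxp⟩
    exact hne ⟨m, Nat.pair (Encodable.encode j) i, p,
      by simp [Nat.unpair_pair, Encodable.decode₂_encode, hp], hxp⟩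
end

section
/- Let f : ℝ → ℝ be bi-Lipschitz with constants (c₁, c₂), i.e. c₁|x − y| ≤ |f(x) − f(y)| ≤ c₂|x − y| for all x, y ∈ ℝ with 0 < c₁ ≤ c₂. If S ⊆ ℝ is (α, β, 0, ρ)-winning for the potential game (α, ρ > 0, β ∈ (0,1), and (c₂/c₁)β < 1), then f(S) is ((c₂/c₁)·α, (c₂/c₁)·β, 0, c₂·ρ)-winning. -/
open Filter Metric Set

private lemma surj_of_strictMono (c₁ : ℝ) (hc₁ : 0 < c₁) (f : ℝ → ℝ)
    (hcont : Continuous f) (hmono : StrictMono f)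
    (hlip₁ : ∀ x y, c₁ * |x - y| ≤ |f x - f y|) : Function.Surjective f := by
  apply hcont.surjective
  · apply tendsto_atTop_mono' atTop (f₁ := fun x => f 0 + c₁ * x)
    · filter_upwards [eventually_ge_atTop (0 : ℝ)] with x hx
      have h1 : c₁ * |x - 0| ≤ |f x - f 0| := hlip₁ x 0
      have h2 : f 0 ≤ f x := hmono.monotone hx
      rw [sub_zero, abs_of_nonneg hx, abs_of_nonneg (by linarith)] at h1
      linarith
    · exact tendsto_atTop_add_const_left atTop (f 0)
        (Tendsto.const_mul_atTop hc₁ tendsto_id)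
  · apply tendsto_atBot_mono' atBot (f₁ := fun x => f 0 + c₁ * x)
    · filter_upwards [eventually_le_atBot (0 : ℝ)] with x hx
      have h1 : c₁ * |x - 0| ≤ |f x - f 0| := hlip₁ x 0
      have h2 : f x ≤ f 0 := hmono.monotone hx
      rw [sub_zero, abs_of_nonpos hx, abs_of_nonpos (by linarith)] at h1
      linarith
    · exact tendsto_atBot_add_const_left atBot (f 0)
        (Tendsto.const_mul_atBot hc₁ tendsto_id)


/-- **Images of winning sets under bi-Lipschitz maps.** If `f : ℝ → ℝ` is bi-Lipschitz with
constants `(c₁, c₂)` and `S` is `(α, β, 0, ρ)`-winning for the potential game (with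
`(c₂/c₁) β < 1`), then `f(S)` is `((c₂/c₁) α, (c₂/c₁) β, 0, c₂ ρ)`-winning. -/
theorem isWinning_image_biLipschitz (c₁ c₂ : ℝ) (hc₁ : 0 < c₁) (hc₁₂ : c₁ ≤ c₂)
    (f : ℝ → ℝ)
    (hlip₁ : ∀ x y, c₁ * |x - y| ≤ |f x - f y|)
    (hlip₂ : ∀ x y, |f x - f y| ≤ c₂ * |x - y|)
    (α β ρ : ℝ) (hα : 0 < α) (hρ : 0 < ρ) (hβ : β ∈ Set.Ioo (0 : ℝ) 1)
    (hβ' : c₂ / c₁ * β < 1)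
    (S : Set ℝ) (hS : IsWinning α β 0 ρ S) :
    IsWinning (c₂ / c₁ * α) (c₂ / c₁ * β) 0 (c₂ * ρ) (f '' S) := by
  obtain ⟨σ, hσ⟩ := hS
  have hc₂ : 0 < c₂ := hc₁.trans_le hc₁₂
  have hinj : Function.Injective f := by
    intro x y h
    have h1 := hlip₁ x y
    rw [h, sub_self, abs_zero] at h1
    have h0 : |x - y| = 0 := le_antisymm (by nlinarith [abs_nonneg (x - y)]) (abs_nonneg _)
    have := abs_eq_zero.mp h0
    linarith [sub_eq_zero.mp this]
  have hcont : Continuous f := by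
    have : LipschitzWith ⟨c₂, hc₂.le⟩ f := by
      apply LipschitzWith.of_dist_le_mul
      intro x y
      rw [Real.dist_eq, Real.dist_eq]
      exact hlip₂ x y
    exact this.continuous
  have hsurj : Function.Surjective f := by
    rcases hcont.strictMono_of_inj hinj with hm | ha
    · exact surj_of_strictMono c₁ hc₁ f hcont hm hlip₁
    · have hs := surj_of_strictMono c₁ hc₁ (fun x => -(f x)) hcont.neg
        (fun a b hab => neg_lt_neg (ha hab))
        (fun x y => by
          rw [show -(f x) - -(f y) = -(f x - f y) by ring, abs_neg]; exact hlip₁ x y)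
      intro y
      obtain ⟨x, hx⟩ := hs (-y)
      exact ⟨x, by simpa using neg_injective hx⟩
  set g : ℝ → ℝ := Function.invFun f with hgdef
  have hfg : ∀ y, f (g y) = y := fun y => Function.invFun_eq (hsurj y)
  have hg : ∀ y z, c₁ * |g y - g z| ≤ |y - z| := fun y z => by
    have := hlip₁ (g y) (g z); rwa [hfg, hfg] at this
  refine ⟨fun h i => Option.map (fun p => (f p.1, c₂ * p.2))
      (σ (h.map (fun p => (g p.1, p.2 / c₁))) i), ?_⟩
  intro B' hB'
  obtain ⟨hpos, h0, hnest, hratio, hlim⟩ := hB'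
  set B : ℕ → ℝ × ℝ := fun m => (g (B' m).1, (B' m).2 / c₁) with hBdef
  have histmap : ∀ m, (hist B' m).map (fun p => (g p.1, p.2 / c₁)) = hist B m := by
    intro m
    simp [hist, List.map_ofFn]
    exact ⟨rfl, rfl⟩
  -- distance between consecutive centers of Bob's play
  have hcd : ∀ m, |(B' (m+1)).1 - (B' m).1| + (B' (m+1)).2 ≤ (B' m).2 := by
    intro m
    have h1 : |(B' (m+1)).1 + (B' (m+1)).2 - (B' m).1| ≤ (B' m).2 := by
      have hmem : (B' (m+1)).1 + (B' (m+1)).2 ∈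
          Metric.closedBall (B' (m+1)).1 (B' (m+1)).2 := by
        rw [Metric.mem_closedBall, Real.dist_eq]
        rw [show (B' (m+1)).1 + (B' (m+1)).2 - (B' (m+1)).1 = (B' (m+1)).2 by ring,
          abs_of_nonneg (hpos (m+1)).le]
      have h := hnest m hmem
      rwa [Metric.mem_closedBall, Real.dist_eq] at h
    have h2 : |(B' (m+1)).1 - (B' (m+1)).2 - (B' m).1| ≤ (B' m).2 := by
      have hmem : (B' (m+1)).1 - (B' (m+1)).2 ∈
          Metric.closedBall (B' (m+1)).1 (B' (m+1)).2 := by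
        rw [Metric.mem_closedBall, Real.dist_eq]
        rw [show (B' (m+1)).1 - (B' (m+1)).2 - (B' (m+1)).1 = -(B' (m+1)).2 by ring,
          abs_neg, abs_of_nonneg (hpos (m+1)).le]
      have h := hnest m hmem
      rwa [Metric.mem_closedBall, Real.dist_eq] at h
    rcases le_total (B' m).1 (B' (m+1)).1 with h | h
    · rw [abs_of_nonneg (by linarith)]
      have := abs_le.1 h1; linarith [this.2]
    · rw [abs_of_nonpos (by linarith)]
      have := abs_le.1 h2; linarith [this.1]
  have hBpos : ∀ m, 0 < (B m).2 := fun m => div_pos (hpos m) hc₁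
  have hBleg : BobLegal β ρ B := by
    refine ⟨hBpos, ?_, ?_, ?_, ?_⟩
    · show ρ ≤ (B' 0).2 / c₁
      rw [le_div_iff₀ hc₁]
      nlinarith
    · intro m x hx
      rw [Metric.mem_closedBall, Real.dist_eq] at hx ⊢
      have htri : |x - (B m).1| ≤ |x - (B (m+1)).1| + |(B (m+1)).1 - (B m).1| := by
        have := abs_sub_le x (B (m+1)).1 (B m).1
        exact this
      have hgd : |(B (m+1)).1 - (B m).1| ≤ |(B' (m+1)).1 - (B' m).1| / c₁ := by
        rw [le_div_iff₀ hc₁, mul_comm]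
        exact hg (B' (m+1)).1 (B' m).1
      have hsum : (B' (m+1)).2 / c₁ + |(B' (m+1)).1 - (B' m).1| / c₁ ≤ (B' m).2 / c₁ := by
        rw [← add_div, div_le_div_iff₀ hc₁ hc₁]
        nlinarith [hcd m]
      calc |x - (B m).1| ≤ |x - (B (m+1)).1| + |(B (m+1)).1 - (B m).1| := htri
        _ ≤ (B' (m+1)).2 / c₁ + |(B' (m+1)).1 - (B' m).1| / c₁ := add_le_add hx hgd
        _ ≤ (B' m).2 / c₁ := hsum
    · intro m
      show β * ((B' m).2 / c₁) ≤ (B' (m+1)).2 / c₁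
      rw [mul_div_assoc', div_le_div_iff₀ hc₁ hc₁]
      have h1 : (1:ℝ) ≤ c₂ / c₁ := (one_le_div hc₁).2 hc₁₂
      have h2 : β * (B' m).2 ≤ c₂ / c₁ * β * (B' m).2 := by
        apply mul_le_mul_of_nonneg_right _ (hpos m).le
        nlinarith [hβ.1]
      nlinarith [hratio m]
    · show Tendsto (fun m => (B' m).2 / c₁) atTop (nhds 0)
      simpa using hlim.div_const c₁
  obtain ⟨hAleg, hwin⟩ := hσ B hBleg
  constructor
  · intro m
    obtain ⟨hp, hrest⟩ := hAleg m
    rw [if_pos rfl] at hrest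
    obtain ⟨hu, hr⟩ := hrest
    refine ⟨?_, ?_⟩
    · intro i p hp'
      simp only [histmap m] at hp'
      obtain ⟨q, hq, hFq⟩ := Option.map_eq_some_iff.mp hp'
      have := hp i q hq
      rw [← hFq]
      exact mul_pos hc₂ this
    · rw [if_pos rfl]
      constructor
      · intro i j p q hp' hq'
        simp only [histmap m] at hp' hq'
        obtain ⟨p', hp'', _⟩ := Option.map_eq_some_iff.mp hp'
        obtain ⟨q', hq'', _⟩ := Option.map_eq_some_iff.mp hq'
        exact hu i j p' q' hp'' hq''
      · intro i p hp'
        simp only [histmap m] at hp'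
        obtain ⟨q, hq, hFq⟩ := Option.map_eq_some_iff.mp hp'
        have hle := hr i q hq
        have : (B m).2 = (B' m).2 / c₁ := rfl
        rw [this] at hle
        rw [← hFq]
        show c₂ * q.2 ≤ c₂ / c₁ * α * (B' m).2
        calc c₂ * q.2 ≤ c₂ * (α * ((B' m).2 / c₁)) :=
              mul_le_mul_of_nonneg_left hle hc₂.le
          _ = c₂ / c₁ * α * (B' m).2 := by ring
  · intro y hy hne
    have hx : ∀ m, g y ∈ Metric.closedBall (B m).1 (B m).2 := by
      intro m
      rw [Metric.mem_closedBall, Real.dist_eq]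
      show |g y - g (B' m).1| ≤ (B' m).2 / c₁
      rw [le_div_iff₀ hc₁, mul_comm]
      calc c₁ * |g y - g (B' m).1| ≤ |y - (B' m).1| := hg y (B' m).1
        _ ≤ (B' m).2 := by
            have := hy m; rwa [Metric.mem_closedBall, Real.dist_eq] at this
    have hnotold : ¬ erasedBy σ B (g y) := by
      rintro ⟨m, i, p, hsome, hmem⟩
      apply hne
      refine ⟨m, i, (f p.1, c₂ * p.2), ?_, ?_⟩
      · show Option.map _ (σ ((hist B' m).map _) i) = _
        rw [histmap m, hsome]
        rfl
      · rw [Metric.mem_closedBall, Real.dist_eq] at hmem ⊢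
        show |y - f p.1| ≤ c₂ * p.2
        calc |y - f p.1| = |f (g y) - f p.1| := by rw [hfg]
          _ ≤ c₂ * |g y - p.1| := hlip₂ _ _
          _ ≤ c₂ * p.2 := mul_le_mul_of_nonneg_left hmem hc₂.le
    have hxS : g y ∈ S := hwin (g y) hx hnotold
    exact ⟨g y, hxS, hfg y⟩
end

section
/- Fix β ∈ (0, 1/4], ρ > 0, x₀ ∈ ℝ, an integer N ≥ 2, an integer j ≥ 0, and set ρ_n := β^n·ρ. Let B ∈ 𝓓_{jN} and B'' ∈ 𝓓_{(j+1)N} with B'' ⊆ (1/2)B, where (1/2)B is the ball with the same center as B and half the radius, 𝓓_n := {B[3·ρ_n·z + x₀, ρ_n] : z ∈ ℤ} and 𝓔_n := {B[(ρ_n/2)·z + x₀, ρ_n] : z ∈ ℤ}. Then for every integer n with jN < n < (j+1)N there exists B' ∈ 𝓔_n with B' ⊆ B and B'' ⊆ (1/2)B'. Equivalently, in arithmetic form: if k ∈ {1, …, N−1} and z, z'' ∈ ℤ satisfy 3·|β^N·z'' − z| ≤ 1/2 − β^N, then there exists z' ∈ ℤ with |z' − 6·z''·β^{N−k}| ≤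 1 − 2·β^{N−k} and |z' − 6·z·β^{−k}| ≤ 2·(β^{−k} − 1). -/
private lemma aux_intermediate (a b c x₀ w w'' : ℝ) (hbpos : 0 < b) (hcpos : 0 < c)
    (hca : c ≤ a / 4) (hbc : b ≤ c / 4)
    (hsub : Metric.closedBall (3 * b * w'' + x₀) b ⊆
      Metric.closedBall (3 * a * w + x₀) (a / 2)) :
    ∃ z' : ℤ,
      Metric.closedBall (c / 2 * (z' : ℝ) + x₀) c ⊆
          Metric.closedBall (3 * a * w + x₀) a ∧
        Metric.closedBall (3 * b * w'' + x₀) b ⊆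
          Metric.closedBall (c / 2 * (z' : ℝ) + x₀) (c / 2) := by
  have h1 := hsub (show 3 * b * w'' + x₀ + b ∈ _ by
    simp [Real.dist_eq, abs_of_nonneg hbpos.le])
  have h2 := hsub (show 3 * b * w'' + x₀ - b ∈ _ by
    simp [Real.dist_eq, abs_of_nonneg hbpos.le])
  simp only [Metric.mem_closedBall, Real.dist_eq, abs_le] at h1 h2
  refine ⟨round (6 * b * w'' / c), ?_, ?_⟩ <;>
  · set z' : ℤ := round (6 * b * w'' / c) with hz'
    have hr : |c / 2 * (z' : ℝ) - 3 * b * w''| ≤ c / 4 := by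
      have h := abs_sub_round (6 * b * w'' / c)
      have key : c / 2 * (z' : ℝ) - 3 * b * w''
          = -(c / 2 * (6 * b * w'' / c - (z' : ℝ))) := by
        field_simp
        ring
      rw [key, abs_neg, abs_mul, abs_of_nonneg (by linarith : (0:ℝ) ≤ c / 2)]
      have := mul_le_mul_of_nonneg_left h (by linarith : (0:ℝ) ≤ c / 2)
      linarith
    rw [abs_le] at hr
    intro x hx
    simp only [Metric.mem_closedBall, Real.dist_eq, abs_le] at hx ⊢
    constructor <;> linarith [hx.1, hx.2, hr.1, hr.2, h1.1, h1.2, h2.1, h2.2]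

/-- **Intermediate balls.** Fix `β ∈ (0, 1/4]`, `ρ > 0`, `x₀ ∈ ℝ`, integers `N ≥ 2`,
`j ≥ 0`, and set `ρ_n = βⁿ ρ`. Let `B = B[3 ρ_{jN} z + x₀, ρ_{jN}] ∈ 𝓓_{jN}` and
`B'' = B[3 ρ_{(j+1)N} z'' + x₀, ρ_{(j+1)N}] ∈ 𝓓_{(j+1)N}` with `B'' ⊆ (1/2)B`. Then for
every `n` with `jN < n < (j+1)N` there exists `B' = B[(ρ_n/2) z' + x₀, ρ_n] ∈ 𝓔_n` with
`B' ⊆ B` and `B'' ⊆ (1/2)B'`. -/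
theorem exists_intermediate_ball (β ρ x₀ : ℝ) (hβ : β ∈ Set.Ioc (0 : ℝ) (1 / 4))
    (hρ : 0 < ρ) (N : ℕ) (hN : 2 ≤ N) (j : ℕ) (z z'' : ℤ)
    (hsub : Metric.closedBall (3 * (β ^ ((j + 1) * N) * ρ) * (z'' : ℝ) + x₀)
        (β ^ ((j + 1) * N) * ρ) ⊆
      Metric.closedBall (3 * (β ^ (j * N) * ρ) * (z : ℝ) + x₀) (β ^ (j * N) * ρ / 2))
    (n : ℕ) (hn₁ : j * N < n) (hn₂ : n < (j + 1) * N) :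
    ∃ z' : ℤ,
      Metric.closedBall (β ^ n * ρ / 2 * (z' : ℝ) + x₀) (β ^ n * ρ) ⊆
          Metric.closedBall (3 * (β ^ (j * N) * ρ) * (z : ℝ) + x₀) (β ^ (j * N) * ρ) ∧
        Metric.closedBall (3 * (β ^ ((j + 1) * N) * ρ) * (z'' : ℝ) + x₀)
            (β ^ ((j + 1) * N) * ρ) ⊆
          Metric.closedBall (β ^ n * ρ / 2 * (z' : ℝ) + x₀) (β ^ n * ρ / 2) := by
  obtain ⟨hβ0, hβ4⟩ := hβ
  have hβ1 : β ≤ 1 := hβ4.trans (by norm_num)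
  have hca : β ^ n * ρ ≤ β ^ (j * N) * ρ / 4 := by
    have h1 : β ^ n ≤ β ^ (j * N + 1) := pow_le_pow_of_le_one hβ0.le hβ1 hn₁
    rw [pow_succ] at h1
    have h2 : β ^ (j * N) * β ≤ β ^ (j * N) * (1 / 4) :=
      mul_le_mul_of_nonneg_left hβ4 (pow_pos hβ0 (j * N)).le
    have h3 := mul_le_mul_of_nonneg_right (h1.trans h2) hρ.le
    linarith
  have hbc : β ^ ((j + 1) * N) * ρ ≤ β ^ n * ρ / 4 := by
    have h1 : β ^ ((j + 1) * N) ≤ β ^ (n + 1) := pow_le_pow_of_le_one hβ0.le hβ1 hn₂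
    rw [pow_succ] at h1
    have h2 : β ^ n * β ≤ β ^ n * (1 / 4) :=
      mul_le_mul_of_nonneg_left hβ4 (pow_pos hβ0 n).le
    have h3 := mul_le_mul_of_nonneg_right (h1.trans h2) hρ.le
    linarith
  exact aux_intermediate (β ^ (j * N) * ρ) (β ^ ((j + 1) * N) * ρ) (β ^ n * ρ) x₀
    (z : ℝ) (z'' : ℝ) (by positivity) (by positivity) hca hbc hsub
end

section
/- Let c ∈ (0,1), γ > 0, α > 0, r > 0 and y > 0, and let (ρ_i)_{i ∈ I} be a countable family of positive real numbers with Σ_{i ∈ I} ρ_i^c ≤ (α·r)^c. Then Σ_{i ∈ I} min{1, ρ_i^c/(γ·y)^c} · (ρ_i + 2y)/r ≤ 3·α^c·max{α^{1−c}, γ^{−c}·(y/r)^{1−c}}. -/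
/-- For `c ∈ (0,1)`, `γ, α, r, y > 0` and a countable family `(ρ_i)` of positive reals
with `∑ ρ_i^c ≤ (α r)^c` (a possibly infinite sum of nonnegative terms):
`∑ min {1, ρ_i^c/(γy)^c} (ρ_i + 2y)/r ≤ 3 α^c max {α^(1-c), γ^(-c) (y/r)^(1-c)}`. -/
theorem tsum_min_mul_le (c γ α r y : ℝ) (hc : c ∈ Set.Ioo (0 : ℝ) 1) (hγ : 0 < γ)
    (hα : 0 < α) (hr : 0 < r) (hy : 0 < y)
    {ι : Type*} [Countable ι] (ρ : ι → ℝ) (hρ : ∀ i, 0 < ρ i)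
    (hsum : ∑' i, ENNReal.ofReal (ρ i ^ c) ≤ ENNReal.ofReal ((α * r) ^ c)) :
    ∑' i, ENNReal.ofReal (min 1 (ρ i ^ c / (γ * y) ^ c) * ((ρ i + 2 * y) / r)) ≤
      ENNReal.ofReal (3 * α ^ c * max (α ^ (1 - c)) (γ ^ (-c) * (y / r) ^ (1 - c))) := by
  obtain ⟨hc0, hc1⟩ := hc
  have hαr : (0:ℝ) < α * r := mul_pos hα hr
  have hγy : (0:ℝ) < γ * y := mul_pos hγ hy
  have hle : ∀ i, ρ i ≤ α * r := by
    intro i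
    have h1 : ENNReal.ofReal (ρ i ^ c) ≤ ENNReal.ofReal ((α * r) ^ c) :=
      le_trans (ENNReal.le_tsum i) hsum
    have h2 : ρ i ^ c ≤ (α * r) ^ c :=
      (ENNReal.ofReal_le_ofReal_iff (by positivity)).1 h1
    by_contra h
    push_neg at h
    exact absurd h2 (not_le.2 (Real.rpow_lt_rpow hαr.le h hc0))
  set C : ℝ := (α * r) ^ (1 - c) / r + 2 * y ^ (1 - c) / (r * γ ^ c) with hC
  have hCpos : 0 < C := by positivity
  have key : ∀ i, min 1 (ρ i ^ c / (γ * y) ^ c) * ((ρ i + 2 * y) / r) ≤ C * ρ i ^ c := by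
    intro i
    have hρi := hρ i
    have hρc : (0:ℝ) < ρ i ^ c := Real.rpow_pos_of_pos hρi c
    have h1 : ρ i ≤ (α * r) ^ (1 - c) * ρ i ^ c := by
      have h' : ρ i ^ (1 - c) ≤ (α * r) ^ (1 - c) :=
        Real.rpow_le_rpow hρi.le (hle i) (by linarith)
      calc ρ i = ρ i ^ (1 - c) * ρ i ^ c := by
            rw [← Real.rpow_add hρi]; norm_num
        _ ≤ (α * r) ^ (1 - c) * ρ i ^ c := mul_le_mul_of_nonneg_right h' hρc.le
    have h2 : (ρ i ^ c / (γ * y) ^ c) * (2 * y) = 2 * y ^ (1 - c) / γ ^ c * ρ i ^ c := by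
      have hyc : (0:ℝ) < y ^ c := Real.rpow_pos_of_pos hy c
      have hγc : (0:ℝ) < γ ^ c := Real.rpow_pos_of_pos hγ c
      have h5 : y ^ (1 - c) * y ^ c = y := by rw [← Real.rpow_add hy]; norm_num
      rw [Real.mul_rpow hγ.le hy.le]
      field_simp
      linear_combination (-1 : ℝ) * h5
    have hmin0 : 0 ≤ min 1 (ρ i ^ c / (γ * y) ^ c) := le_min zero_le_one (by positivity)
    have hmin1 : min 1 (ρ i ^ c / (γ * y) ^ c) ≤ 1 := min_le_left _ _
    have hmin2 : min 1 (ρ i ^ c / (γ * y) ^ c) ≤ ρ i ^ c / (γ * y) ^ c := min_le_right _ _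
    have expand : min 1 (ρ i ^ c / (γ * y) ^ c) * ((ρ i + 2 * y) / r)
        = (min 1 (ρ i ^ c / (γ * y) ^ c) * ρ i + min 1 (ρ i ^ c / (γ * y) ^ c) * (2 * y)) / r := by
      ring
    have target : C * ρ i ^ c
        = ((α * r) ^ (1 - c) * ρ i ^ c + (ρ i ^ c / (γ * y) ^ c) * (2 * y)) / r := by
      rw [h2, hC]
      field_simp
    rw [expand, target]
    gcongr ?_ / r
    refine add_le_add ?_ (mul_le_mul_of_nonneg_right hmin2 (by positivity))
    calc min 1 (ρ i ^ c / (γ * y) ^ c) * ρ i ≤ 1 * ρ i :=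
          mul_le_mul_of_nonneg_right hmin1 hρi.le
      _ = ρ i := one_mul _
      _ ≤ (α * r) ^ (1 - c) * ρ i ^ c := h1
  have step : ∑' i, ENNReal.ofReal (min 1 (ρ i ^ c / (γ * y) ^ c) * ((ρ i + 2 * y) / r))
      ≤ ENNReal.ofReal (C * (α * r) ^ c) := by
    calc ∑' i, ENNReal.ofReal (min 1 (ρ i ^ c / (γ * y) ^ c) * ((ρ i + 2 * y) / r))
        ≤ ∑' i, ENNReal.ofReal (C * ρ i ^ c) :=
          ENNReal.tsum_le_tsum fun i => ENNReal.ofReal_le_ofReal (key i)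
      _ = ∑' i, ENNReal.ofReal C * ENNReal.ofReal (ρ i ^ c) := by
          simp_rw [← ENNReal.ofReal_mul hCpos.le]
      _ = ENNReal.ofReal C * ∑' i, ENNReal.ofReal (ρ i ^ c) := ENNReal.tsum_mul_left
      _ ≤ ENNReal.ofReal C * ENNReal.ofReal ((α * r) ^ c) := by gcongr
      _ = ENNReal.ofReal (C * (α * r) ^ c) := (ENNReal.ofReal_mul hCpos.le).symm
  refine step.trans (ENNReal.ofReal_le_ofReal ?_)
  have hαc : (0:ℝ) < α ^ c := Real.rpow_pos_of_pos hα c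
  have eq : C * (α * r) ^ c
      = α ^ c * α ^ (1 - c) + 2 * α ^ c * (γ ^ (-c) * (y / r) ^ (1 - c)) := by
    have h1 : (α * r) ^ (1 - c) = α ^ (1 - c) * r ^ (1 - c) := Real.mul_rpow hα.le hr.le
    have h2 : (α * r) ^ c = α ^ c * r ^ c := Real.mul_rpow hα.le hr.le
    have h3 : (y / r) ^ (1 - c) = y ^ (1 - c) / r ^ (1 - c) := Real.div_rpow hy.le hr.le _
    have h4 : γ ^ (-c) = (γ ^ c)⁻¹ := by rw [Real.rpow_neg hγ.le]
    have h5 : r ^ (1 - c) * r ^ c = r := by rw [← Real.rpow_add hr]; norm_num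
    have hγc : (0:ℝ) < γ ^ c := Real.rpow_pos_of_pos hγ c
    have hrc : (0:ℝ) < r ^ c := Real.rpow_pos_of_pos hr c
    have hr1c : (0:ℝ) < r ^ (1 - c) := Real.rpow_pos_of_pos hr _
    rw [hC, h1, h2, h3, h4]
    field_simp
    linear_combination h5
  rw [eq]
  have m1 : α ^ (1 - c) ≤ max (α ^ (1 - c)) (γ ^ (-c) * (y / r) ^ (1 - c)) := le_max_left _ _
  have m2 : γ ^ (-c) * (y / r) ^ (1 - c) ≤ max (α ^ (1 - c)) (γ ^ (-c) * (y / r) ^ (1 - c)) :=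
    le_max_right _ _
  nlinarith [m1, m2, hαc]
end

section
/- Let n ≥ 1, let x₁, …, x_n ∈ ℝ and y₁, …, y_n ≥ 0, let b > max{x₁, …, x_n, y₁, …, y_n}, and suppose max_{1 ≤ i ≤ n}(√(b − y_i) + x_i) < min_{1 ≤ j ≤ n}(√(b + 1 − y_j) + x_j). Define P_i(x) := (x − x_i)² + y_i. Then there exists τ₀ > 0 (depending only on n, b and the x_i, y_i) such that for every compact set C ⊆ ℝ with convex hull [b, b + 1] and thickness τ(C) ≥ τ₀, there exists t ∈ ℝ with P_i(t) ∈ C for all i = 1, …, n. -/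
open Set

/-- Two "gaps" of a set are equal or disjoint (ordered). -/
lemma gap_cases {B : Set ℝ} {a c a' c' : ℝ} (ha : a ∈ B) (hc : c ∈ B)
    (ha' : a' ∈ B) (hc' : c' ∈ B) (hac : a < c) (hac' : a' < c')
    (hg : Set.Ioo a c ∩ B = ∅) (hg' : Set.Ioo a' c' ∩ B = ∅) :
    (a = a' ∧ c = c') ∨ c ≤ a' ∨ c' ≤ a := by
  have hm : ∀ z ∈ B, z ∉ Set.Ioo a c := by
    intro z hz hzz
    have : z ∈ Set.Ioo a c ∩ B := ⟨hzz, hz⟩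
    simp [hg] at this
  have hm' : ∀ z ∈ B, z ∉ Set.Ioo a' c' := by
    intro z hz hzz
    have : z ∈ Set.Ioo a' c' ∩ B := ⟨hzz, hz⟩
    simp [hg'] at this
  rcases lt_trichotomy a a' with h | h | h
  · right; left
    by_contra hlt
    push_neg at hlt
    exact hm a' ha' ⟨h, hlt⟩
  · subst h
    rcases lt_trichotomy c c' with h2 | h2 | h2
    · exact absurd ⟨hac, h2⟩ (hm' c hc)
    · exact Or.inl ⟨rfl, h2⟩
    · exact absurd ⟨hac', h2⟩ (hm c' hc')
  · right; right
    by_contra hlt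
    push_neg at hlt
    exact hm' a ha ⟨h, hlt⟩

/-- One refinement step of the nested-interval construction. -/
lemma step_lemma (n : ℕ) (hn : 1 ≤ n) (B : Fin n → Set ℝ)
    (hsep : ∀ i, ∀ a ∈ B i, ∀ c ∈ B i, ∀ a' ∈ B i, ∀ c' ∈ B i,
      a < c → c ≤ a' → a' < c' → Set.Ioo a c ∩ B i = ∅ → Set.Ioo a' c' ∩ B i = ∅ →
      16 * (n : ℝ)^2 * min (c - a) (c' - a') ≤ a' - c)
    (u v : ℝ) (huv : u < v)
    (hinv : ∀ i, ∀ a ∈ B i, ∀ c ∈ B i, a < c → Set.Ioo a c ∩ B i = ∅ →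
      (Set.Ioo a c ∩ Set.Icc u v).Nonempty → c - a ≤ (v - u) / (4 * n)) :
    ∃ u', u ≤ u' ∧ u' + (v - u) / (4 * n) ≤ v ∧
      (∀ i, ∀ a ∈ B i, ∀ c ∈ B i, a < c → Set.Ioo a c ∩ B i = ∅ →
        (Set.Ioo a c ∩ Set.Icc u' (u' + (v - u) / (4 * n))).Nonempty →
        c - a ≤ ((u' + (v - u) / (4 * n)) - u') / (4 * n)) := by
  have hn1 : (1 : ℝ) ≤ (n : ℝ) := by exact_mod_cast hn
  set L : ℝ := v - u with hL
  have hLpos : 0 < L := by simp [hL]; linarith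
  set L' : ℝ := L / (4 * n) with hL'
  have hL'pos : 0 < L' := by positivity
  have hL'le : L' ≤ L / 4 := by
    rw [hL']
    apply div_le_div_of_nonneg_left hLpos.le (by norm_num)
    nlinarith
  -- the bad sets
  set Bad : Fin n → Set ℝ := fun i =>
    {w : ℝ | w ∈ Set.Icc u (v - L') ∧ ∃ a c, a ∈ B i ∧ c ∈ B i ∧ a < c ∧
      Set.Ioo a c ∩ B i = ∅ ∧ L' / (4 * n) < c - a ∧
      (Set.Ioo a c ∩ Set.Icc w (w + L')).Nonempty} with hBad
  -- each bad set is contained in an interval of length ≤ 2 L'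
  have hBadsub : ∀ i, ∀ w₀ ∈ Bad i, ∀ a₀ c₀, a₀ ∈ B i → c₀ ∈ B i → a₀ < c₀ →
      Set.Ioo a₀ c₀ ∩ B i = ∅ → L' / (4 * n) < c₀ - a₀ →
      (Set.Ioo a₀ c₀ ∩ Set.Icc w₀ (w₀ + L')).Nonempty →
      Bad i ⊆ Set.Icc (a₀ - L') c₀ := by
    intro i w₀ hw₀ a₀ c₀ ha₀ hc₀ hac₀ hg₀ hlen₀ hne₀
    intro w hw
    obtain ⟨hwmem, a, c, ha, hc, hac, hg, hlen, ⟨z, hz1, hz2⟩⟩ := hw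
    obtain ⟨z₀, hz₀1, hz₀2⟩ := hne₀
    -- both gaps meet Icc u v
    have hzuv : z ∈ Set.Icc u v := by
      constructor
      · exact le_trans hwmem.1 hz2.1
      · exact le_trans hz2.2 (by have := hwmem.2; linarith)
    have hz₀uv : z₀ ∈ Set.Icc u v := by
      constructor
      · exact le_trans hw₀.1.1 hz₀2.1
      · exact le_trans hz₀2.2 (by have := hw₀.1.2; linarith)
    -- the two gaps must coincide
    have hkey : a = a₀ ∧ c = c₀ := by
      rcases gap_cases ha hc ha₀ hc₀ hac hac₀ hg hg₀ with h | h | h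
      · exact h
      · exfalso
        have h1 := hsep i a ha c hc a₀ ha₀ c₀ hc₀ hac h hac₀ hg hg₀
        have hmin : L' / (4 * n) < min (c - a) (c₀ - a₀) := lt_min hlen hlen₀
        have h16 : (0:ℝ) < 16 * (n:ℝ)^2 := by positivity
        have h2 : 16 * (n:ℝ)^2 * (L' / (4*n)) ≤ 16 * (n:ℝ)^2 * min (c - a) (c₀ - a₀) :=
          mul_le_mul_of_nonneg_left hmin.le h16.le
        have h3 : 16 * (n:ℝ)^2 * (L' / (4*n)) = L := by
          rw [hL']
          field_simp
          ring
        -- a₀ - c < L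
        have h4 : a₀ - c < L := by
          have : a₀ < z₀ := hz₀1.1
          have : c > z := hz1.2
          have := hzuv.1
          have := hz₀uv.2
          simp only [hL]
          linarith [hz₀1.1, hz1.2, hzuv.1, hz₀uv.2]
        linarith
      · exfalso
        have h1 := hsep i a₀ ha₀ c₀ hc₀ a ha c hc hac₀ h hac hg₀ hg
        have hmin : L' / (4 * n) < min (c₀ - a₀) (c - a) := lt_min hlen₀ hlen
        have h16 : (0:ℝ) < 16 * (n:ℝ)^2 := by positivity
        have h2 : 16 * (n:ℝ)^2 * (L' / (4*n)) ≤ 16 * (n:ℝ)^2 * min (c₀ - a₀) (c - a) :=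
          mul_le_mul_of_nonneg_left hmin.le h16.le
        have h3 : 16 * (n:ℝ)^2 * (L' / (4*n)) = L := by
          rw [hL']
          field_simp
          ring
        have h4 : a - c₀ < L := by
          simp only [hL]
          linarith [hz1.1, hz₀1.2, hz₀uv.1, hzuv.2]
        linarith
    obtain ⟨rfl, rfl⟩ := hkey
    constructor
    · linarith [hz1.1, hz2.2]
    · linarith [hz1.2, hz2.1]
  -- measure bound: there is a good point
  have hgood : ∃ w ∈ Set.Icc u (v - L'), w ∉ ⋃ i, Bad i := by
    by_contra hcon
    push_neg at hcon
    have hsub : Set.Icc u (v - L') ⊆ ⋃ i, Bad i := fun w hw => hcon w hw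
    have hvol1 : MeasureTheory.volume (Set.Icc u (v - L')) ≤
        MeasureTheory.volume (⋃ i, Bad i) := MeasureTheory.measure_mono hsub
    have hvol2 : MeasureTheory.volume (⋃ i, Bad i) ≤
        ∑' i : Fin n, MeasureTheory.volume (Bad i) := MeasureTheory.measure_iUnion_le _
    have hvol3 : ∀ i, MeasureTheory.volume (Bad i) ≤ ENNReal.ofReal (2 * L') := by
      intro i
      rcases Set.eq_empty_or_nonempty (Bad i) with h | ⟨w₀, hw₀⟩
      · simp [h]
      · obtain ⟨hwmem, a₀, c₀, ha₀, hc₀, hac₀, hg₀, hlen₀, hne₀⟩ := hw₀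
        have hsub2 : Bad i ⊆ Set.Icc (a₀ - L') c₀ :=
          hBadsub i w₀ ⟨hwmem, a₀, c₀, ha₀, hc₀, hac₀, hg₀, hlen₀, hne₀⟩
            a₀ c₀ ha₀ hc₀ hac₀ hg₀ hlen₀ hne₀
        calc MeasureTheory.volume (Bad i) ≤ MeasureTheory.volume (Set.Icc (a₀ - L') c₀) :=
              MeasureTheory.measure_mono hsub2
          _ = ENNReal.ofReal (c₀ - (a₀ - L')) := Real.volume_Icc
          _ ≤ ENNReal.ofReal (2 * L') := by
              apply ENNReal.ofReal_le_ofReal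
              -- c₀ - a₀ ≤ L' since the gap meets Icc u v
              obtain ⟨z₀, hz₀1, hz₀2⟩ := hne₀
              have hz₀uv : z₀ ∈ Set.Icc u v :=
                ⟨le_trans hwmem.1 hz₀2.1, le_trans hz₀2.2 (by have := hwmem.2; linarith)⟩
              have := hinv i a₀ ha₀ c₀ hc₀ hac₀ hg₀ ⟨z₀, hz₀1, hz₀uv⟩
              linarith
    have hcount : ∑' _i : Fin n, ENNReal.ofReal (2 * L') =
        (n : ENNReal) * ENNReal.ofReal (2 * L') := by
      rw [tsum_fintype, Finset.sum_const, Finset.card_univ, Fintype.card_fin, nsmul_eq_mul]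
    have hsum : ∑' i : Fin n, MeasureTheory.volume (Bad i) ≤
        ENNReal.ofReal ((n : ℝ) * (2 * L')) := by
      refine le_trans (ENNReal.tsum_le_tsum hvol3) ?_
      rw [hcount, ENNReal.ofReal_mul (by positivity : (0:ℝ) ≤ (n:ℝ)), ENNReal.ofReal_natCast]
    have hfinal : ENNReal.ofReal (v - L' - u) ≤ ENNReal.ofReal ((n : ℝ) * (2 * L')) := by
      calc ENNReal.ofReal (v - L' - u) = MeasureTheory.volume (Set.Icc u (v - L')) := by
            rw [Real.volume_Icc]
        _ ≤ _ := le_trans hvol1 (le_trans hvol2 hsum)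
    rw [ENNReal.ofReal_le_ofReal_iff (by positivity)] at hfinal
    -- contradiction: v - L' - u = L - L' = 4nL' - L' ≥ 3nL' > 2nL'
    have hLL : L = 4 * n * L' := by
      rw [hL']; field_simp
    have : v - L' - u = L - L' := by rw [hL]; ring
    nlinarith
  obtain ⟨w, hwmem, hwgood⟩ := hgood
  refine ⟨w, hwmem.1, by have := hwmem.2; linarith, ?_⟩
  intro i a ha c hc hac hg hne
  by_contra hbig
  push_neg at hbig
  apply hwgood
  apply Set.mem_iUnion.mpr
  have hLw : (w + L') - w = L' := by ring
  rw [hLw] at hbig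
  exact ⟨i, hwmem, a, c, ha, hc, hac, hg, hbig, hne⟩

/-- Thick closed sets straddling a common interval have a common point. -/
lemma key_lemma (n : ℕ) (hn : 1 ≤ n) (B : Fin n → Set ℝ) (hB : ∀ i, IsClosed (B i))
    (p q : ℝ) (hpq : p < q)
    (hend : ∀ i, (∃ z ∈ B i, z ≤ p) ∧ (∃ z ∈ B i, q ≤ z))
    (hsep : ∀ i, ∀ a ∈ B i, ∀ c ∈ B i, ∀ a' ∈ B i, ∀ c' ∈ B i,
      a < c → c ≤ a' → a' < c' → Set.Ioo a c ∩ B i = ∅ → Set.Ioo a' c' ∩ B i = ∅ →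
      16 * (n : ℝ)^2 * min (c - a) (c' - a') ≤ a' - c)
    (hsmall : ∀ i, ∀ a ∈ B i, ∀ c ∈ B i, a < c → Set.Ioo a c ∩ B i = ∅ →
      c - a ≤ (q - p) / (4 * n)) :
    ∃ t, ∀ i, t ∈ B i := by
  have hn1 : (1:ℝ) ≤ (n:ℝ) := by exact_mod_cast hn
  have hstep : ∀ u v, (p ≤ u ∧ v ≤ q ∧ u < v ∧
      (∀ i, ∀ a ∈ B i, ∀ c ∈ B i, a < c → Set.Ioo a c ∩ B i = ∅ →
        (Set.Ioo a c ∩ Set.Icc u v).Nonempty → c - a ≤ (v - u) / (4 * n))) →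
      ∃ u', u ≤ u' ∧ u' + (v - u)/(4*n) ≤ v ∧
      (p ≤ u' ∧ u' + (v - u)/(4*n) ≤ q ∧ u' < u' + (v - u)/(4*n) ∧
      (∀ i, ∀ a ∈ B i, ∀ c ∈ B i, a < c → Set.Ioo a c ∩ B i = ∅ →
        (Set.Ioo a c ∩ Set.Icc u' (u' + (v - u)/(4*n))).Nonempty →
        c - a ≤ ((u' + (v - u)/(4*n)) - u') / (4 * n))) := by
    rintro u v ⟨hpu, hvq, huv, hinv⟩
    obtain ⟨u', h1, h2, h3⟩ := step_lemma n hn B hsep u v huv hinv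
    have hpos : 0 < (v - u)/(4*(n:ℝ)) :=
      div_pos (by linarith) (by linarith)
    exact ⟨u', h1, h2, le_trans hpu h1, le_trans h2 hvq, by linarith, h3⟩
  choose! F hF1 hF2 hF3 using hstep
  set G : ℝ × ℝ → ℝ × ℝ := fun r => (F r.1 r.2, F r.1 r.2 + (r.2 - r.1)/(4*n)) with hG
  set seq : ℕ → ℝ × ℝ := fun k => G^[k] (p, q) with hseq
  have hseqS : ∀ k, seq (k+1) = G (seq k) := fun k => Function.iterate_succ_apply' G k (p,q)
  have hgood : ∀ k, p ≤ (seq k).1 ∧ (seq k).2 ≤ q ∧ (seq k).1 < (seq k).2 ∧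
      (∀ i, ∀ a ∈ B i, ∀ c ∈ B i, a < c → Set.Ioo a c ∩ B i = ∅ →
        (Set.Ioo a c ∩ Set.Icc (seq k).1 (seq k).2).Nonempty →
        c - a ≤ ((seq k).2 - (seq k).1) / (4 * n)) := by
    intro k
    induction k with
    | zero =>
      exact ⟨le_refl p, le_refl q, hpq,
        fun i a ha c hc h1 h2 _ => hsmall i a ha c hc h1 h2⟩
    | succ k ih =>
      rw [hseqS k]
      exact hF3 _ _ ih
  have hmono1 : Monotone (fun k => (seq k).1) := by
    apply monotone_nat_of_le_succ
    intro k
    rw [hseqS k]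
    exact hF1 _ _ (hgood k)
  have hmono2 : Antitone (fun k => (seq k).2) := by
    apply antitone_nat_of_succ_le
    intro k
    rw [hseqS k]
    exact hF2 _ _ (hgood k)
  have hlen : ∀ k, (seq k).2 - (seq k).1 = (q - p) * (1/(4*(n:ℝ)))^k := by
    intro k
    induction k with
    | zero =>
      have h0 : seq 0 = (p, q) := rfl
      rw [h0]
      simp
    | succ k ih =>
      rw [hseqS k]
      show (F (seq k).1 (seq k).2 + ((seq k).2 - (seq k).1)/(4*(n:ℝ)))
          - F (seq k).1 (seq k).2 = (q - p) * (1/(4*(n:ℝ)))^(k+1)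
      rw [show (F (seq k).1 (seq k).2 + ((seq k).2 - (seq k).1)/(4*(n:ℝ)))
          - F (seq k).1 (seq k).2 = ((seq k).2 - (seq k).1)/(4*(n:ℝ)) by ring, ih]
      ring
  have hbdd : BddAbove (Set.range fun k => (seq k).1) := by
    refine ⟨q, ?_⟩
    rintro z ⟨k, rfl⟩
    exact le_trans (hgood k).2.2.1.le (hgood k).2.1
  set t : ℝ := sSup (Set.range fun k => (seq k).1) with ht
  have hts : ∀ k, (seq k).1 ≤ t := fun k => le_csSup hbdd ⟨k, rfl⟩
  have htv : ∀ k, t ≤ (seq k).2 := by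
    intro k
    apply csSup_le (Set.range_nonempty _)
    rintro z ⟨m, rfl⟩
    rcases le_total m k with h | h
    · exact le_trans (hmono1 h) (hgood k).2.2.1.le
    · exact le_trans (hgood m).2.2.1.le (hmono2 h)
  refine ⟨t, fun i => ?_⟩
  have hnonempty : ∀ k, ∃ z ∈ B i, z ∈ Set.Icc (seq k).1 (seq k).2 := by
    intro k
    by_contra hcon
    push_neg at hcon
    set u : ℝ := (seq k).1
    set v : ℝ := (seq k).2
    have huv : u < v := (hgood k).2.2.1
    have hA : (B i ∩ Set.Iic u).Nonempty := by
      obtain ⟨z, hz, hzp⟩ := (hend i).1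
      exact ⟨z, hz, le_trans hzp (hgood k).1⟩
    have hAa : BddAbove (B i ∩ Set.Iic u) :=
      BddAbove.mono (Set.inter_subset_right) bddAbove_Iic
    have haB : sSup (B i ∩ Set.Iic u) ∈ B i ∩ Set.Iic u :=
      IsClosed.csSup_mem ((hB i).inter isClosed_Iic) hA hAa
    set a : ℝ := sSup (B i ∩ Set.Iic u)
    have hC : (B i ∩ Set.Ici v).Nonempty := by
      obtain ⟨z, hz, hzq⟩ := (hend i).2
      exact ⟨z, hz, le_trans (hgood k).2.1 hzq⟩
    have hCb : BddBelow (B i ∩ Set.Ici v) :=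
      BddBelow.mono (Set.inter_subset_right) bddBelow_Ici
    have hcB : sInf (B i ∩ Set.Ici v) ∈ B i ∩ Set.Ici v :=
      IsClosed.csInf_mem ((hB i).inter isClosed_Ici) hC hCb
    set c : ℝ := sInf (B i ∩ Set.Ici v)
    have hac : a < c := lt_of_le_of_lt haB.2 (lt_of_lt_of_le huv hcB.2)
    have hgap : Set.Ioo a c ∩ B i = ∅ := by
      rw [Set.eq_empty_iff_forall_notMem]
      rintro z ⟨⟨hz1, hz2⟩, hzB⟩
      have hznot := hcon z hzB
      rw [Set.mem_Icc] at hznot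
      push_neg at hznot
      rcases le_or_gt z u with h | h
      · exact absurd (le_csSup hAa ⟨hzB, h⟩) (not_le.mpr hz1)
      · have hzv : v ≤ z := by
          rcases le_or_gt v z with h2 | h2
          · exact h2
          · exact absurd h2.le (not_le.mpr (hznot h.le))
        exact absurd (csInf_le hCb ⟨hzB, hzv⟩) (not_le.mpr hz2)
    have hau : a ≤ u := Set.mem_Iic.mp haB.2
    have hcv : v ≤ c := Set.mem_Ici.mp hcB.2
    have hmid : ((u + v)/2) ∈ Set.Ioo a c ∩ Set.Icc u v := by
      constructor
      · constructor
        · linarith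
        · linarith
      · constructor <;> [linarith; linarith]
    have hle : c - a ≤ (v - u) / (4 * (n:ℝ)) := (hgood k).2.2.2 i a haB.1 c hcB.1 hac hgap ⟨_, hmid⟩
    have hvu : v - u ≤ c - a := by linarith
    have hdiv : (v - u)/(4*(n:ℝ)) < v - u := by
      apply div_lt_self (by linarith) (by linarith)
    linarith
  rw [← (hB i).closure_eq]
  rw [Metric.mem_closure_iff]
  intro ε hε
  have hr1 : (1:ℝ)/(4*(n:ℝ)) < 1 := by
    rw [div_lt_one (by linarith)]
    linarith
  obtain ⟨k, hk⟩ := exists_pow_lt_of_lt_one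
    (div_pos hε (by linarith : (0:ℝ) < q - p)) hr1
  have hklen : (q - p) * (1/(4*(n:ℝ)))^k < ε := by
    rw [lt_div_iff₀ (by linarith : (0:ℝ) < q - p)] at hk
    calc (q - p) * (1/(4*(n:ℝ)))^k = (1/(4*(n:ℝ)))^k * (q - p) := by ring
      _ < ε := hk
  obtain ⟨z, hzB, hz1, hz2⟩ := hnonempty k
  refine ⟨z, hzB, ?_⟩
  rw [Real.dist_eq, abs_lt]
  have h1 := hts k
  have h2 := htv k
  have h3 := hlen k
  constructor <;> nlinarith [pow_pos (show (0:ℝ) < 1/(4*(n:ℝ)) by positivity) k]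

lemma setDist_ge {S T : Set ℝ} (hS : S.Nonempty) (hT : T.Nonempty) {δ : ℝ}
    (h : ∀ s ∈ S, ∀ t ∈ T, δ ≤ dist s t) : δ ≤ setDist S T := by
  apply le_csInf (hS.image2 hT)
  rintro d ⟨s, hs, t, ht, rfl⟩
  exact h s hs t ht

lemma chunk_bound {C : Set ℝ} {τ : ℝ} (hns : ¬ ∃ x : ℝ, C = {x})
    (h : ENNReal.ofReal τ ≤ thickness C) {S : Set ℝ} (hS : IsChunk C S) :
    τ * setDist S (C \ S) ≤ Metric.diam S := by
  rw [thickness, if_neg hns] at h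
  have h2 : ENNReal.ofReal τ ≤ ENNReal.ofReal (Metric.diam S / setDist S (C \ S)) :=
    le_trans h (iInf₂_le S hS)
  have hd : 0 < setDist S (C \ S) := hS.2.2.2
  have h3 : τ ≤ Metric.diam S / setDist S (C \ S) :=
    (ENNReal.ofReal_le_ofReal_iff (div_nonneg Metric.diam_nonneg hd.le)).mp h2
  exact (le_div_iff₀ hd).mp h3

lemma dist_ge_of_le {s t δ : ℝ} (h : s + δ ≤ t) : δ ≤ dist s t := by
  rw [Real.dist_eq, abs_sub_comm]
  exact le_trans (by linarith) (le_abs_self (t - s))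

lemma gap_small {C : Set ℝ} {b τ : ℝ} (hτ : 0 ≤ τ)
    (hsub : C ⊆ Set.Icc b (b+1)) (hb : b ∈ C) (hns : ¬ ∃ x : ℝ, C = {x})
    (hth : ENNReal.ofReal τ ≤ thickness C)
    {a c : ℝ} (ha : a ∈ C) (hc : c ∈ C) (hac : a < c) (hg : Set.Ioo a c ∩ C = ∅) :
    τ * (c - a) ≤ 1 := by
  set S : Set ℝ := C ∩ Set.Icc b a with hSdef
  have hba : b ≤ a := (hsub ha).1
  have hSne : S.Nonempty := ⟨a, ha, hba, le_refl a⟩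
  have hcS : c ∉ S := fun hmem => absurd hmem.2.2 (not_le.mpr hac)
  have hTne : (C \ S).Nonempty := ⟨c, hc, hcS⟩
  have hdist : c - a ≤ setDist S (C \ S) := by
    apply setDist_ge hSne hTne
    rintro s ⟨hsC, hsb, hsa⟩ t ⟨htC, htS⟩
    have hta : a < t := by
      by_contra hle
      push_neg at hle
      exact htS ⟨htC, (hsub htC).1, hle⟩
    have htc : c ≤ t := by
      by_contra hlt
      push_neg at hlt
      have : t ∈ Set.Ioo a c ∩ C := ⟨⟨hta, hlt⟩, htC⟩
      simp [hg] at this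
    exact dist_ge_of_le (by linarith)
  have hchk : IsChunk C S := by
    refine ⟨⟨b, a, rfl⟩, hSne,
      (Set.ssubset_iff_of_subset Set.inter_subset_left).mpr ⟨c, hc, hcS⟩, ?_⟩
    linarith
  have hdiam : Metric.diam S ≤ a - b := by
    calc Metric.diam S ≤ Metric.diam (Set.Icc b a) :=
          Metric.diam_mono Set.inter_subset_right (Metric.isBounded_Icc _ _)
      _ = a - b := Real.diam_Icc hba
  have hmain := chunk_bound hns hth hchk
  have h1 : τ * (c - a) ≤ τ * setDist S (C \ S) := mul_le_mul_of_nonneg_left hdist hτ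
  have h2 : a - b ≤ 1 := by have := (hsub ha).2; linarith
  linarith

lemma gap_sep {C : Set ℝ} {τ : ℝ} (hτ : 0 ≤ τ) (hns : ¬ ∃ x : ℝ, C = {x})
    (hth : ENNReal.ofReal τ ≤ thickness C)
    {a c a' c' : ℝ} (ha : a ∈ C) (hc : c ∈ C) (ha' : a' ∈ C) (hc' : c' ∈ C)
    (hac : a < c) (hca' : c ≤ a') (hac' : a' < c')
    (hg : Set.Ioo a c ∩ C = ∅) (hg' : Set.Ioo a' c' ∩ C = ∅) :
    τ * min (c - a) (c' - a') ≤ a' - c := by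
  set S : Set ℝ := C ∩ Set.Icc c a' with hSdef
  have hSne : S.Nonempty := ⟨c, hc, le_refl c, hca'⟩
  have haS : a ∉ S := fun hmem => absurd hmem.2.1 (not_le.mpr hac)
  have hTne : (C \ S).Nonempty := ⟨a, ha, haS⟩
  have hmin : 0 < min (c - a) (c' - a') := lt_min (by linarith) (by linarith)
  have hdist : min (c - a) (c' - a') ≤ setDist S (C \ S) := by
    apply setDist_ge hSne hTne
    rintro s ⟨hsC, hsc, hsa'⟩ t ⟨htC, htS⟩
    have : t < c ∨ a' < t := by
      by_contra hcon
      push_neg at hcon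
      exact htS ⟨htC, hcon.1, hcon.2⟩
    rcases this with h | h
    · have hta : t ≤ a := by
        by_contra hlt
        push_neg at hlt
        have : t ∈ Set.Ioo a c ∩ C := ⟨⟨hlt, h⟩, htC⟩
        simp [hg] at this
      have : min (c - a) (c' - a') ≤ c - a := min_le_left _ _
      rw [Real.dist_eq]
      refine le_trans ?_ (le_abs_self (s - t))
      linarith
    · have htc : c' ≤ t := by
        by_contra hlt
        push_neg at hlt
        have : t ∈ Set.Ioo a' c' ∩ C := ⟨⟨h, hlt⟩, htC⟩
        simp [hg'] at this
      have : min (c - a) (c' - a') ≤ c' - a' := min_le_right _ _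
      rw [Real.dist_eq, abs_sub_comm]
      refine le_trans ?_ (le_abs_self (t - s))
      linarith
  have hchk : IsChunk C S := by
    refine ⟨⟨c, a', rfl⟩, hSne,
      (Set.ssubset_iff_of_subset Set.inter_subset_left).mpr ⟨a, ha, haS⟩, ?_⟩
    linarith
  have hdiam : Metric.diam S ≤ a' - c := by
    calc Metric.diam S ≤ Metric.diam (Set.Icc c a') :=
          Metric.diam_mono Set.inter_subset_right (Metric.isBounded_Icc _ _)
      _ = a' - c := Real.diam_Icc hca'
  have hmain := chunk_bound hns hth hchk
  have h1 : τ * min (c - a) (c' - a') ≤ τ * setDist S (C \ S) :=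
    mul_le_mul_of_nonneg_left hdist hτ
  linarith

lemma sqrt_slope {yv s t b : ℝ} (hy : yv < b) (hs : b ≤ s) (hst : s ≤ t) (ht : t ≤ b + 1) :
    (t - s) / (2 * Real.sqrt (b + 1 - yv)) ≤ Real.sqrt (t - yv) - Real.sqrt (s - yv) ∧
    Real.sqrt (t - yv) - Real.sqrt (s - yv) ≤ (t - s) / (2 * Real.sqrt (b - yv)) := by
  have hs0 : 0 < Real.sqrt (b - yv) := Real.sqrt_pos.mpr (by linarith)
  have hs1 : 0 < Real.sqrt (b + 1 - yv) := Real.sqrt_pos.mpr (by linarith)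
  set s0 := Real.sqrt (b - yv)
  set s1 := Real.sqrt (b + 1 - yv)
  set uu := Real.sqrt (s - yv) with huu
  set ww := Real.sqrt (t - yv) with hww
  have hu2 : uu^2 = s - yv := Real.sq_sqrt (by linarith)
  have hw2 : ww^2 = t - yv := Real.sq_sqrt (by linarith)
  have h0u : s0 ≤ uu := Real.sqrt_le_sqrt (by linarith)
  have h0w : s0 ≤ ww := Real.sqrt_le_sqrt (by linarith)
  have hu1 : uu ≤ s1 := Real.sqrt_le_sqrt (by linarith)
  have hw1 : ww ≤ s1 := Real.sqrt_le_sqrt (by linarith)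
  have huw : uu ≤ ww := Real.sqrt_le_sqrt (by linarith)
  constructor
  · rw [div_le_iff₀ (by positivity)]
    nlinarith [mul_nonneg (sub_nonneg.mpr huw) (by linarith : (0:ℝ) ≤ 2*s1 - (ww + uu))]
  · rw [le_div_iff₀ (by positivity)]
    nlinarith [mul_nonneg (sub_nonneg.mpr huw) (by linarith : (0:ℝ) ≤ (ww + uu) - 2*s0)]


set_option maxHeartbeats 1000000 in
/-- **Quadratic patterns in thick compact sets.** Let `x₁, …, x_n ∈ ℝ`, `y₁, …, y_n ≥ 0`,
`b > max {xᵢ, yᵢ}`, and suppose `max_i (√(b - yᵢ) + xᵢ) < min_j (√(b + 1 - yⱼ) + xⱼ)`.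
Set `Pᵢ(x) = (x - xᵢ)² + yᵢ`. Then there is `τ₀ > 0` such that every compact `C ⊆ ℝ` with
convex hull `[b, b+1]` and thickness at least `τ₀` contains the quadratic pattern: there is
`t ∈ ℝ` with `Pᵢ(t) ∈ C` for all `i`. -/
theorem thick_compact_contains_quadratic_pattern (n : ℕ) (hn : 1 ≤ n)
    (x y : Fin n → ℝ) (hy : ∀ i, 0 ≤ y i) (b : ℝ)
    (hbx : ∀ i, x i < b) (hby : ∀ i, y i < b)
    (hsep : ∀ i j, Real.sqrt (b - y i) + x i < Real.sqrt (b + 1 - y j) + x j) :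
    ∃ τ₀ : ℝ, 0 < τ₀ ∧
      ∀ C : Set ℝ, IsCompact C → convexHull ℝ C = Set.Icc b (b + 1) →
        ENNReal.ofReal τ₀ ≤ thickness C →
          ∃ t : ℝ, ∀ i, (t - x i) ^ 2 + y i ∈ C := by
  have hFn : Nonempty (Fin n) := Fin.pos_iff_nonempty.mp hn
  have hn1 : (1:ℝ) ≤ (n:ℝ) := by exact_mod_cast hn
  have hs0pos : ∀ i, 0 < Real.sqrt (b - y i) :=
    fun i => Real.sqrt_pos.mpr (by have := hby i; linarith)
  have hs1pos : ∀ i, 0 < Real.sqrt (b + 1 - y i) :=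
    fun i => Real.sqrt_pos.mpr (by have := hby i; linarith)
  set p : ℝ := Finset.univ.sup' Finset.univ_nonempty
    (fun i => x i + Real.sqrt (b - y i)) with hpdef
  set q : ℝ := Finset.univ.inf' Finset.univ_nonempty
    (fun j => x j + Real.sqrt (b + 1 - y j)) with hqdef
  have hpq : p < q := by
    rw [hpdef, Finset.sup'_lt_iff]
    intro i _
    rw [hqdef, Finset.lt_inf'_iff]
    intro j _
    have := hsep i j
    linarith
  set g : Fin n → ℝ := fun i => 16*(n:ℝ)^2 * (Real.sqrt (b + 1 - y i) / Real.sqrt (b - y i))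
    + 4*(n:ℝ)*(1/(2*Real.sqrt (b - y i)))/(q - p) with hgdef
  have hgnn : ∀ i, 0 ≤ g i := by
    intro i
    have h0 := hs0pos i
    have h1 := hs1pos i
    have h2 : (0:ℝ) < q - p := by linarith
    positivity
  set τ₀ : ℝ := 1 + Finset.univ.sup' Finset.univ_nonempty g with hτ₀def
  have hgle : ∀ i, g i ≤ τ₀ - 1 := by
    intro i
    have := Finset.le_sup' g (Finset.mem_univ i)
    rw [hτ₀def]
    linarith
  have hτ₀pos : 0 < τ₀ := by
    obtain ⟨i⟩ := hFn
    have := hgle i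
    have := hgnn i
    linarith
  have hτ₀a : ∀ i, 16*(n:ℝ)^2 * Real.sqrt (b + 1 - y i) ≤ τ₀ * Real.sqrt (b - y i) := by
    intro i
    have h0 := hs0pos i
    have h1 := hs1pos i
    have hA : 16*(n:ℝ)^2 * (Real.sqrt (b + 1 - y i) / Real.sqrt (b - y i)) ≤ τ₀ := by
      have hB := hgle i
      have hC : (0:ℝ) ≤ 4*(n:ℝ)*(1/(2*Real.sqrt (b - y i)))/(q - p) := by
        have : (0:ℝ) < q - p := by linarith
        positivity
      simp only [hgdef] at hB
      linarith
    have := mul_le_mul_of_nonneg_right hA h0.le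
    calc 16*(n:ℝ)^2 * Real.sqrt (b + 1 - y i)
        = 16*(n:ℝ)^2 * (Real.sqrt (b + 1 - y i) / Real.sqrt (b - y i)) * Real.sqrt (b - y i) := by
          field_simp
      _ ≤ τ₀ * Real.sqrt (b - y i) := this
  have hτ₀b : ∀ i, 4*(n:ℝ) ≤ τ₀ * ((q - p) * (2 * Real.sqrt (b - y i))) := by
    intro i
    have h0 := hs0pos i
    have hqp : (0:ℝ) < q - p := by linarith
    have hA : 4*(n:ℝ)*(1/(2*Real.sqrt (b - y i)))/(q - p) ≤ τ₀ := by
      have hB := hgle i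
      have hC : (0:ℝ) ≤ 16*(n:ℝ)^2 * (Real.sqrt (b + 1 - y i) / Real.sqrt (b - y i)) := by
        have := hs1pos i
        positivity
      simp only [hgdef] at hB
      linarith
    have := mul_le_mul_of_nonneg_right hA (by positivity : (0:ℝ) ≤ (q - p) * (2 * Real.sqrt (b - y i)))
    calc (4:ℝ)*(n:ℝ)
        = 4*(n:ℝ)*(1/(2*Real.sqrt (b - y i)))/(q - p) * ((q - p) * (2 * Real.sqrt (b - y i))) := by
          field_simp
      _ ≤ τ₀ * ((q - p) * (2 * Real.sqrt (b - y i))) := this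
  clear_value p q g τ₀
  refine ⟨τ₀, hτ₀pos, ?_⟩
  intro C hC hconv hthick
  have hsub : C ⊆ Set.Icc b (b+1) := by
    rw [← hconv]; exact subset_convexHull ℝ C
  have hIccne : (Set.Icc b (b+1)).Nonempty := Set.nonempty_Icc.mpr (by linarith)
  have hCne : C.Nonempty := by
    by_contra h
    rw [Set.not_nonempty_iff_eq_empty] at h
    rw [h, convexHull_empty] at hconv
    exact hIccne.ne_empty hconv.symm
  have hbhull : b ∈ convexHull ℝ C := by
    rw [hconv]; exact ⟨le_refl b, by linarith⟩
  have hb1hull : b + 1 ∈ convexHull ℝ C := by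
    rw [hconv]; exact ⟨by linarith, le_refl (b+1)⟩
  have hhull : convexHull ℝ C ⊆ Set.Icc (sInf C) (sSup C) :=
    convexHull_min (fun z hz => ⟨csInf_le hC.bddBelow hz, le_csSup hC.bddAbove hz⟩)
      (convex_Icc _ _)
  have hbC : b ∈ C := by
    have h1 : sInf C ≤ b := (hhull hbhull).1
    have h2 : b ≤ sInf C := le_csInf hCne fun z hz => (hsub hz).1
    have := hC.sInf_mem hCne
    rwa [le_antisymm h1 h2] at this
  have hb1C : b + 1 ∈ C := by
    have h1 : b + 1 ≤ sSup C := (hhull hb1hull).2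
    have h2 : sSup C ≤ b + 1 := csSup_le hCne fun z hz => (hsub hz).2
    have := hC.sSup_mem hCne
    rwa [le_antisymm h2 h1] at this
  have hns : ¬ ∃ x0 : ℝ, C = {x0} := by
    rintro ⟨x0, rfl⟩
    have h1 : b = x0 := hbC
    have h2 : b + 1 = x0 := hb1C
    linarith
  -- the n sets
  set f : Fin n → ℝ → ℝ := fun i s => x i + Real.sqrt (s - y i) with hfdef
  set BB : Fin n → Set ℝ := fun i => f i '' C with hBBdef
  have hBclosed : ∀ i, IsClosed (BB i) := by
    intro i
    have hcont : Continuous (f i) :=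
      continuous_const.add (Real.continuous_sqrt.comp (continuous_id.sub continuous_const))
    exact (hC.image hcont).isClosed
  -- pulling back gaps
  have hpull : ∀ i, ∀ a ∈ BB i, ∀ c ∈ BB i, a < c → Set.Ioo a c ∩ BB i = ∅ →
      ∃ A Cc, A ∈ C ∧ Cc ∈ C ∧ A < Cc ∧ Set.Ioo A Cc ∩ C = ∅ ∧
        f i A = a ∧ f i Cc = c ∧
        (Cc - A)/(2 * Real.sqrt (b + 1 - y i)) ≤ c - a ∧
        c - a ≤ (Cc - A)/(2 * Real.sqrt (b - y i)) := by
    intro i a ha c hc hac hg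
    obtain ⟨A, hA, rfl⟩ := ha
    obtain ⟨Cc, hCc, rfl⟩ := hc
    have hA' := hsub hA
    have hCc' := hsub hCc
    have hmono : A < Cc := by
      by_contra h
      push_neg at h
      have : Real.sqrt (Cc - y i) ≤ Real.sqrt (A - y i) := Real.sqrt_le_sqrt (by linarith)
      simp only [hfdef] at hac
      linarith
    have hgap : Set.Ioo A Cc ∩ C = ∅ := by
      rw [Set.eq_empty_iff_forall_notMem]
      rintro z ⟨⟨hz1, hz2⟩, hzC⟩
      have h1 : Real.sqrt (A - y i) < Real.sqrt (z - y i) :=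
        Real.sqrt_lt_sqrt (by have := hby i; have := hA'.1; linarith) (by linarith)
      have h2 : Real.sqrt (z - y i) < Real.sqrt (Cc - y i) :=
        Real.sqrt_lt_sqrt (by have := hby i; have := (hsub hzC).1; linarith) (by linarith)
      have : f i z ∈ Set.Ioo (f i A) (f i Cc) ∩ BB i := by
        refine ⟨⟨?_, ?_⟩, ⟨z, hzC, rfl⟩⟩
        · simp only [hfdef]; linarith
        · simp only [hfdef]; linarith
      rw [hg] at this
      exact absurd this (Set.notMem_empty _)
    have hslope := sqrt_slope (hby i) hA'.1 hmono.le hCc'.2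
    refine ⟨A, Cc, hA, hCc, hmono, hgap, rfl, rfl, ?_, ?_⟩
    · have : f i Cc - f i A = Real.sqrt (Cc - y i) - Real.sqrt (A - y i) := by
        simp only [hfdef]; ring
      rw [this]
      exact hslope.1
    · have : f i Cc - f i A = Real.sqrt (Cc - y i) - Real.sqrt (A - y i) := by
        simp only [hfdef]; ring
      rw [this]
      exact hslope.2
  -- endpoints
  have hend : ∀ i, (∃ z ∈ BB i, z ≤ p) ∧ (∃ z ∈ BB i, q ≤ z) := by
    intro i
    constructor
    · refine ⟨f i b, ⟨b, hbC, rfl⟩, ?_⟩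
      have h1 : f i b = x i + Real.sqrt (b - y i) := by simp only [hfdef]
      rw [h1, hpdef]
      exact Finset.le_sup' (fun i => x i + Real.sqrt (b - y i)) (Finset.mem_univ i)
    · refine ⟨f i (b+1), ⟨b+1, hb1C, rfl⟩, ?_⟩
      have h1 : f i (b+1) = x i + Real.sqrt (b + 1 - y i) := by
        simp only [hfdef]
      rw [h1, hqdef]
      exact Finset.inf'_le (fun j => x j + Real.sqrt (b + 1 - y j)) (Finset.mem_univ i)
  -- separation hypothesis for BB
  have hsepBB : ∀ i, ∀ a ∈ BB i, ∀ c ∈ BB i, ∀ a' ∈ BB i, ∀ c' ∈ BB i,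
      a < c → c ≤ a' → a' < c' → Set.Ioo a c ∩ BB i = ∅ → Set.Ioo a' c' ∩ BB i = ∅ →
      16 * (n : ℝ)^2 * min (c - a) (c' - a') ≤ a' - c := by
    intro i a ha c hc a' ha' c' hc' h1 h2 h3 hg hg'
    obtain ⟨A, Cc, hA, hCc, hACc, hgapC, hfA, hfCc, hlb, hub⟩ := hpull i a ha c hc h1 hg
    obtain ⟨A', Cc', hA', hCc', hACc', hgapC', hfA', hfCc', hlb', hub'⟩ :=
      hpull i a' ha' c' hc' h3 hg'
    have h0 := hs0pos i
    have h01 := hs1pos i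
    have hCcA' : Cc ≤ A' := by
      by_contra h
      push_neg at h
      have hlt : Real.sqrt (A' - y i) < Real.sqrt (Cc - y i) :=
        Real.sqrt_lt_sqrt (by have := hby i; have := (hsub hA').1; linarith) (by linarith)
      have hc2 : a' < c := by
        rw [← hfA', ← hfCc]
        simp only [hfdef]
        linarith
      linarith
    have hsepC := gap_sep hτ₀pos.le hns hthick hA hCc hA' hCc' hACc hCcA' hACc' hgapC hgapC'
    have hm : 0 < min (c - a) (c' - a') := lt_min (by linarith) (by linarith)
    have hub2 : (c - a) * (2 * Real.sqrt (b - y i)) ≤ Cc - A := by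
      rw [le_div_iff₀ (by positivity)] at hub
      exact hub
    have hub2' : (c' - a') * (2 * Real.sqrt (b - y i)) ≤ Cc' - A' := by
      rw [le_div_iff₀ (by positivity)] at hub'
      exact hub'
    have hminC : 2 * Real.sqrt (b - y i) * min (c - a) (c' - a') ≤ min (Cc - A) (Cc' - A') := by
      apply le_min
      · calc 2 * Real.sqrt (b - y i) * min (c - a) (c' - a')
            ≤ 2 * Real.sqrt (b - y i) * (c - a) :=
              mul_le_mul_of_nonneg_left (min_le_left _ _) (by positivity)
          _ = (c - a) * (2 * Real.sqrt (b - y i)) := by ring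
          _ ≤ Cc - A := hub2
      · calc 2 * Real.sqrt (b - y i) * min (c - a) (c' - a')
            ≤ 2 * Real.sqrt (b - y i) * (c' - a') :=
              mul_le_mul_of_nonneg_left (min_le_right _ _) (by positivity)
          _ = (c' - a') * (2 * Real.sqrt (b - y i)) := by ring
          _ ≤ Cc' - A' := hub2'
    -- bridge bound
    have heq : a' - c = Real.sqrt (A' - y i) - Real.sqrt (Cc - y i) := by
      rw [← hfA', ← hfCc]
      simp only [hfdef]
      ring
    have hbr := (sqrt_slope (hby i) (hsub hCc).1 hCcA' (hsub hA').2).1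
    rw [div_le_iff₀ (by positivity)] at hbr
    have hbr' : A' - Cc ≤ (a' - c) * (2 * Real.sqrt (b + 1 - y i)) := by
      rw [heq]
      exact hbr
    have hstep1 : τ₀ * (2 * Real.sqrt (b - y i) * min (c - a) (c' - a')) ≤ A' - Cc :=
      le_trans (mul_le_mul_of_nonneg_left hminC hτ₀pos.le) hsepC
    have hstep2 : 16*(n:ℝ)^2 * Real.sqrt (b + 1 - y i) * (2 * min (c - a) (c' - a')) ≤
        τ₀ * Real.sqrt (b - y i) * (2 * min (c - a) (c' - a')) :=
      mul_le_mul_of_nonneg_right (hτ₀a i) (by positivity)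
    have hfin : 16*(n:ℝ)^2 * min (c - a) (c' - a') * (2 * Real.sqrt (b + 1 - y i)) ≤
        (a' - c) * (2 * Real.sqrt (b + 1 - y i)) := by
      nlinarith [hstep2, hstep1, hbr']
    exact (mul_le_mul_iff_of_pos_right (by positivity : (0:ℝ) < 2 * Real.sqrt (b + 1 - y i))).mp hfin
  -- smallness hypothesis for BB
  have hsmallBB : ∀ i, ∀ a ∈ BB i, ∀ c ∈ BB i, a < c → Set.Ioo a c ∩ BB i = ∅ →
      c - a ≤ (q - p) / (4 * n) := by
    intro i a ha c hc hac hg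
    obtain ⟨A, Cc, hA, hCc, hACc, hgapC, hfA, hfCc, hlb, hub⟩ := hpull i a ha c hc hac hg
    have h0 := hs0pos i
    have hqp : (0:ℝ) < q - p := by linarith
    have hCgap : τ₀ * (Cc - A) ≤ 1 :=
      gap_small hτ₀pos.le hsub hbC hns hthick hA hCc hACc hgapC
    rw [le_div_iff₀ (by linarith : (0:ℝ) < 4*(n:ℝ))]
    have hub2 : (c - a) * (2 * Real.sqrt (b - y i)) ≤ Cc - A := by
      rw [le_div_iff₀ (by positivity)] at hub
      exact hub
    nlinarith [mul_le_mul_of_nonneg_left hub2 hτ₀pos.le, hCgap, hτ₀b i,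
      mul_pos hτ₀pos (show (0:ℝ) < 2 * Real.sqrt (b - y i) by positivity),
      (show (0:ℝ) < 4*(n:ℝ) by linarith), hac]
  obtain ⟨t, ht⟩ := key_lemma n hn BB hBclosed p q hpq hend hsepBB hsmallBB
  refine ⟨t, fun i => ?_⟩
  obtain ⟨s, hsC, hfs⟩ := ht i
  have hsy : 0 ≤ s - y i := by
    have := (hsub hsC).1
    have := hby i
    linarith
  have h1 : t - x i = Real.sqrt (s - y i) := by
    simp only [hfdef] at hfs
    linarith
  rw [h1, Real.sq_sqrt hsy]
  have h2 : s - y i + y i = s := by ring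
  rw [h2]
  exact hsC
end
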